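/- arXiv:2304.04434 — 8 statements merged into one kernel-verified Lean document; each statement's English description precedes it below -/
import Mathlib

section
/- Let ω, ε, μ > 0, φ ∈ (−π/2, π/2), γ = ω√(εμ)·sinφ and κ² = ω²εμ·cos²φ. Let θ ∈ ℂ with |θ| = 1 and Re θ ≥ 0, and set C_N = Re θ · [(ε+μ) − √((ε−μ)² + 4εμ·sin²φ)] / (2ωεμ·cos²φ). Then C_N ≥ 0 and for every ξ = (ξ₁, ξ₂) ∈ ℂ² and either choice of sign, Re(θ · ((N^± ξ) · ξ̄)) ≥ C_N · (|ξ₁|² + |ξ₂|²). -/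
open Real Matrix

lemma two_step (p q A B Y : ℝ) (hp : 0 ≤ p) (hq : 0 ≤ q) (hA : 0 ≤ A) (hB : 0 ≤ B)
    (hY : Y ^ 2 ≤ 4 * (p * q) * (A * B)) : 0 ≤ p * A + q * B + Y := by
  have hX : 0 ≤ p * A + q * B := add_nonneg (mul_nonneg hp hA) (mul_nonneg hq hB)
  have hX2 : Y ^ 2 ≤ (p * A + q * B) ^ 2 := by nlinarith [sq_nonneg (p * A - q * B)]
  nlinarith [hX, hX2, sq_nonneg (p * A + q * B + Y)]

lemma key_ineq (ε μ t g R s a1 a2 b1 b2 : ℝ) (hε : 0 < ε) (hμ : 0 < μ)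
    (hg2 : g ^ 2 = ε * μ) (hs2 : s ^ 2 = 1) (hRnn : 0 ≤ R)
    (hR2 : R ^ 2 = (ε - μ) ^ 2 + 4 * ε * μ * t ^ 2) :
    ((ε + μ) - R) * (a1 ^ 2 + a2 ^ 2 + (b1 ^ 2 + b2 ^ 2)) ≤
      2 * (ε * (a1 ^ 2 + a2 ^ 2) + μ * (b1 ^ 2 + b2 ^ 2)
        + 2 * s * g * t * (a2 * b1 - a1 * b2)) := by
  have hp : 0 ≤ R - (ε - μ) := by nlinarith [sq_nonneg t, mul_pos hε hμ]
  have hq : 0 ≤ R + (ε - μ) := by nlinarith [sq_nonneg t, mul_pos hε hμ]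
  have hA : (0:ℝ) ≤ a1 ^ 2 + a2 ^ 2 := by positivity
  have hB : (0:ℝ) ≤ b1 ^ 2 + b2 ^ 2 := by positivity
  have hpq : (R - (ε - μ)) * (R + (ε - μ)) = 4 * ε * μ * t ^ 2 := by nlinarith [hR2]
  have hCS : (a2 * b1 - a1 * b2) ^ 2 ≤ (a1 ^ 2 + a2 ^ 2) * (b1 ^ 2 + b2 ^ 2) := by
    nlinarith [sq_nonneg (a1 * b1 + a2 * b2)]
  have hY : (4 * s * g * t * (a2 * b1 - a1 * b2)) ^ 2 ≤
      4 * ((R + (ε - μ)) * (R - (ε - μ))) * ((a1 ^ 2 + a2 ^ 2) * (b1 ^ 2 + b2 ^ 2)) := by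
    rw [mul_comm (R + (ε - μ)) (R - (ε - μ)), hpq]
    have h1 : (4 * s * g * t * (a2 * b1 - a1 * b2)) ^ 2
        = 16 * (ε * μ) * t ^ 2 * (a2 * b1 - a1 * b2) ^ 2 := by
      have : (4 * s * g * t * (a2 * b1 - a1 * b2)) ^ 2
          = 16 * s ^ 2 * g ^ 2 * t ^ 2 * (a2 * b1 - a1 * b2) ^ 2 := by ring
      rw [this, hs2, hg2]; ring
    rw [h1]
    have h0 : (0:ℝ) ≤ 16 * (ε * μ) * t ^ 2 := by positivity
    nlinarith [mul_le_mul_of_nonneg_left hCS h0]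
  have h := two_step (R + (ε - μ)) (R - (ε - μ)) (a1 ^ 2 + a2 ^ 2) (b1 ^ 2 + b2 ^ 2)
    (4 * s * g * t * (a2 * b1 - a1 * b2)) hq hp hA hB hY
  linarith [h]

/-- With ω, ε, μ > 0, φ ∈ (−π/2, π/2), γ = ω√(εμ)sinφ,
κ² = ω²εμcos²φ, θ ∈ ℂ with |θ| = 1 and Re θ ≥ 0, and
C_N = Re θ·[(ε+μ) − √((ε−μ)² + 4εμsin²φ)]/(2ωεμcos²φ):
C_N ≥ 0 and for every ξ ∈ ℂ² and either sign s = ±1 (defining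
N^± = (1/κ²)·[[ωε, ±iγ],[∓iγ, ωμ]]), Re(θ·((N^±ξ)·ξ̄)) ≥ C_N·(|ξ₁|² + |ξ₂|²). -/
theorem stmt_0 (ω ε μ φ : ℝ) (hω : 0 < ω) (hε : 0 < ε) (hμ : 0 < μ)
    (hφ : φ ∈ Set.Ioo (-(π / 2)) (π / 2))
    (γ κ2 : ℝ)
    (hγ : γ = ω * Real.sqrt (ε * μ) * Real.sin φ)
    (hκ2 : κ2 = ω ^ 2 * ε * μ * Real.cos φ ^ 2)
    (θ : ℂ) (hθ : ‖θ‖ = 1) (hθre : 0 ≤ θ.re)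
    (CN : ℝ)
    (hCN : CN = θ.re * ((ε + μ) - Real.sqrt ((ε - μ) ^ 2 + 4 * ε * μ * Real.sin φ ^ 2))
        / (2 * ω * ε * μ * Real.cos φ ^ 2)) :
    0 ≤ CN ∧
    ∀ s : ℝ, (s = 1 ∨ s = -1) → ∀ ξ : Fin 2 → ℂ,
      CN * (‖ξ 0‖ ^ 2 + ‖ξ 1‖ ^ 2) ≤
        (θ * (Matrix.mulVec
            ((κ2 : ℂ)⁻¹ • !![((ω * ε : ℝ) : ℂ), (s : ℂ) * Complex.I * (γ : ℂ);
                -((s : ℂ) * Complex.I * (γ : ℂ)), ((ω * μ : ℝ) : ℂ)]) ξ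
          ⬝ᵥ star ξ)).re := by
  have hc : 0 < Real.cos φ := Real.cos_pos_of_mem_Ioo (by simpa using hφ)
  set R := Real.sqrt ((ε - μ) ^ 2 + 4 * ε * μ * Real.sin φ ^ 2) with hRdef
  have hRnn : 0 ≤ R := Real.sqrt_nonneg _
  have hR2 : R ^ 2 = (ε - μ) ^ 2 + 4 * ε * μ * Real.sin φ ^ 2 := by
    rw [hRdef, Real.sq_sqrt]; positivity
  have hRle : R ≤ ε + μ := by
    rw [hRdef]
    calc Real.sqrt ((ε - μ) ^ 2 + 4 * ε * μ * Real.sin φ ^ 2) ≤ Real.sqrt ((ε + μ) ^ 2) := by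
          apply Real.sqrt_le_sqrt
          nlinarith [Real.sin_sq_le_one φ, mul_pos hε hμ]
      _ = ε + μ := Real.sqrt_sq (by positivity)
  have hden : 0 < 2 * ω * ε * μ * Real.cos φ ^ 2 := by positivity
  have hκ2pos : 0 < κ2 := by rw [hκ2]; positivity
  have hg2 : (Real.sqrt (ε * μ)) ^ 2 = ε * μ := Real.sq_sqrt (by positivity)
  constructor
  · rw [hCN]
    have h1 : 0 ≤ (ε + μ) - R := by linarith
    positivity
  intro s hs ξ
  have hs2 : s ^ 2 = 1 := by rcases hs with h | h <;> rw [h] <;> norm_num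
  have hX : (Matrix.mulVec
            ((κ2 : ℂ)⁻¹ • !![((ω * ε : ℝ) : ℂ), (s : ℂ) * Complex.I * (γ : ℂ);
                -((s : ℂ) * Complex.I * (γ : ℂ)), ((ω * μ : ℝ) : ℂ)]) ξ
          ⬝ᵥ star ξ) =
     (((κ2⁻¹ * (ω * ε * ((ξ 0).re ^ 2 + (ξ 0).im ^ 2) + ω * μ * ((ξ 1).re ^ 2 + (ξ 1).im ^ 2)
        + 2 * s * γ * ((ξ 0).im * (ξ 1).re - (ξ 0).re * (ξ 1).im)) : ℝ)) : ℂ) := by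
    simp [Matrix.mulVec, dotProduct, Fin.sum_univ_two, Complex.ext_iff, Complex.mul_re,
      Complex.mul_im, Complex.add_re, Complex.add_im, Complex.inv_re, Complex.inv_im,
      Complex.normSq]
    simp only [← Complex.ofReal_pow, Complex.ofReal_re, Complex.ofReal_im]
    constructor <;> ring
  rw [hX, Complex.mul_re, Complex.ofReal_re, Complex.ofReal_im, mul_zero, sub_zero]
  have hn0 : ‖ξ 0‖ ^ 2 = (ξ 0).re ^ 2 + (ξ 0).im ^ 2 := by
    rw [Complex.sq_norm, Complex.normSq_apply]; ring
  have hn1 : ‖ξ 1‖ ^ 2 = (ξ 1).re ^ 2 + (ξ 1).im ^ 2 := by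
    rw [Complex.sq_norm, Complex.normSq_apply]; ring
  rw [hCN, hn0, hn1, div_mul_eq_mul_div, div_le_iff₀ hden]
  have hk := key_ineq ε μ (Real.sin φ) (Real.sqrt (ε * μ)) R s
    (ξ 0).re (ξ 0).im (ξ 1).re (ξ 1).im hε hμ hg2 hs2 hRnn hR2
  refine le_trans (b := θ.re * (2 * (ε * ((ξ 0).re ^ 2 + (ξ 0).im ^ 2)
      + μ * ((ξ 1).re ^ 2 + (ξ 1).im ^ 2)
      + 2 * s * Real.sqrt (ε * μ) * Real.sin φ * ((ξ 0).im * (ξ 1).re - (ξ 0).re * (ξ 1).im))))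
    ?_ (le_of_eq ?_)
  · nlinarith [mul_le_mul_of_nonneg_left hk hθre]
  · rw [hγ, hκ2]
    have h1 : ω ≠ 0 := ne_of_gt hω
    have h2 : ε ≠ 0 := ne_of_gt hε
    have h3 : μ ≠ 0 := ne_of_gt hμ
    have h4 : Real.cos φ ≠ 0 := ne_of_gt hc
    field_simp
end

section
/- Let n ∈ ℤ with α_n² ≤ κ², so that β_n = √(κ² − α_n²) ≥ 0 is real. Let δ > 0 and θ_δ = (i+δ)/|i+δ|. If k²·β_n² ≥ γ²·α_n²·δ², then the Hermitian matrix Re(θ_δ·M_n) is positive semidefinite, i.e. Re(θ_δ · ((M_n ξ) · ξ̄)) ≥ 0 for all ξ ∈ ℂ². -/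
open Real Matrix

lemma key_ineq_s3 (w e m bn d g a X Y Im : ℝ) (hw : 0 < w) (he : 0 < e) (hm : 0 < m)
    (hbn : 0 ≤ bn) (hd : 0 < d) (hX : 0 ≤ X) (hY : 0 ≤ Y)
    (hIm : Im ^ 2 ≤ X * Y) (hcond : g ^ 2 * a ^ 2 * d ^ 2 ≤ w ^ 2 * (e * m) * bn ^ 2) :
    2 * d * g * a * Im ≤ w * e * bn * X + w * m * bn * Y := by
  have hR : 0 ≤ w * e * bn * X + w * m * bn * Y := by positivity
  have hL2 : (2 * d * g * a * Im) ^ 2 ≤ (w * e * bn * X + w * m * bn * Y) ^ 2 := by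
    nlinarith [sq_nonneg (w * e * bn * X - w * m * bn * Y),
      mul_le_mul_of_nonneg_right hcond (sq_nonneg Im),
      mul_le_mul_of_nonneg_left hIm (by positivity : (0:ℝ) ≤ w ^ 2 * (e * m) * bn ^ 2)]
  nlinarith [hL2, hR]

set_option maxHeartbeats 1000000 in
/-- With the conical diffraction parameters (k = ω√(εμ),
α = k·sinθ·cosφ, γ = k·sinφ, κ² = k²cos²φ), let n ∈ ℤ with α_n² ≤ κ², so that
β_n = √(κ² − α_n²) ≥ 0 is real. Let δ > 0 and θ_δ = (i+δ)/|i+δ|. If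
k²·β_n² ≥ γ²·α_n²·δ², then Re(θ_δ·M_n) is positive semidefinite, i.e.
Re(θ_δ·((M_n ξ)·ξ̄)) ≥ 0 for all ξ ∈ ℂ². -/
theorem stmt_3 (ω ε μ θ φ : ℝ) (hω : 0 < ω) (hε : 0 < ε) (hμ : 0 < μ)
    (hθ : θ ∈ Set.Ioo (-(π / 2)) (π / 2)) (hφ : φ ∈ Set.Ioo (-(π / 2)) (π / 2))
    (k γ κ2 : ℝ)
    (hk : k = ω * Real.sqrt (ε * μ)) (hγ : γ = k * Real.sin φ)
    (hκ2 : κ2 = k ^ 2 * Real.cos φ ^ 2)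
    (n : ℤ) (an : ℝ) (han : an = (n : ℝ) + k * Real.sin θ * Real.cos φ)
    (hle : an ^ 2 ≤ κ2)
    (bn : ℝ) (hbn : bn = Real.sqrt (κ2 - an ^ 2))
    (δ : ℝ) (hδ : 0 < δ)
    (θδ : ℂ) (hθδ : θδ = (Complex.I + (δ : ℂ)) / ((‖Complex.I + (δ : ℂ)‖ : ℝ) : ℂ))
    (hcond : γ ^ 2 * an ^ 2 * δ ^ 2 ≤ k ^ 2 * bn ^ 2) :
    ∀ ξ : Fin 2 → ℂ,
      0 ≤ (θδ * (Matrix.mulVec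
          ((κ2 : ℂ)⁻¹ • !![-Complex.I * ((ω * ε : ℝ) : ℂ) * (bn : ℂ),
              Complex.I * (γ : ℂ) * (an : ℂ);
              -(Complex.I * (γ : ℂ) * (an : ℂ)),
              -Complex.I * ((ω * μ : ℝ) : ℂ) * (bn : ℂ)]) ξ
        ⬝ᵥ star ξ)).re := by
  intro ξ
  have hcos : 0 < Real.cos φ := Real.cos_pos_of_mem_Ioo hφ
  have hem : 0 < ε * μ := mul_pos hε hμ
  have hkpos : 0 < k := by
    rw [hk]; exact mul_pos hω (Real.sqrt_pos.2 hem)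
  have hκpos : 0 < κ2 := by
    rw [hκ2]; positivity
  have hbn0 : 0 ≤ bn := hbn ▸ Real.sqrt_nonneg _
  have hk2 : k ^ 2 = ω ^ 2 * (ε * μ) := by
    rw [hk, mul_pow, Real.sq_sqrt hem.le]
  set r : ℝ := ‖Complex.I + (δ : ℂ)‖ with hr
  have hrpos : 0 < r := by
    apply norm_pos_iff.mpr
    intro h
    have : (Complex.I + (δ : ℂ)).im = 0 := by rw [h]; simp
    simp at this
  have hIm : ((ξ 1).im * (ξ 0).re - (ξ 1).re * (ξ 0).im) ^ 2 ≤ ((ξ 0).re ^ 2 + (ξ 0).im ^ 2) * ((ξ 1).re ^ 2 + (ξ 1).im ^ 2) := by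
    nlinarith [sq_nonneg ((ξ 0).re * (ξ 1).re + (ξ 0).im * (ξ 1).im)]
  have hkey := key_ineq_s3 ω ε μ bn δ γ an ((ξ 0).re ^ 2 + (ξ 0).im ^ 2) ((ξ 1).re ^ 2 + (ξ 1).im ^ 2)
    ((ξ 1).im * (ξ 0).re - (ξ 1).re * (ξ 0).im) hω hε hμ hbn0 hδ (by positivity) (by positivity) hIm
    (by nlinarith [hcond, hk2])
  have hfac : 0 ≤ r⁻¹ * κ2⁻¹ *
      (ω * ε * bn * ((ξ 0).re ^ 2 + (ξ 0).im ^ 2) + ω * μ * bn * ((ξ 1).re ^ 2 + (ξ 1).im ^ 2)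
        - 2 * δ * γ * an * ((ξ 1).im * (ξ 0).re - (ξ 1).re * (ξ 0).im)) :=
    mul_nonneg (by positivity) (by linarith [hkey])
  rw [hθδ]
  simp [Matrix.mulVec, dotProduct, Fin.sum_univ_two, Complex.mul_re, Complex.mul_im,
    Complex.add_re, Complex.add_im, Complex.div_re, Complex.div_im, Complex.normSq_ofReal,
    ← Complex.ofReal_inv]
  have hrr : r * r⁻¹ ^ 2 = r⁻¹ := by
    field_simp
  ring_nf
  rw [hrr]
  linarith [hfac]
end

section
/- Let n ∈ ℤ with α_n² ≤ κ², so that β_n = √(κ² − α_n²) ≥ 0 is real, and let δ > 0, θ_δ = (i+δ)/|i+δ|. Then det(Re(θ_δ·M_n)) = (k²·β_n² − γ²·α_n²·δ²) / (κ⁴·(1+δ²)). -/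
open Real Matrix

/-- With the conical diffraction parameters, let n ∈ ℤ with
α_n² ≤ κ² (so β_n = √(κ² − α_n²) ≥ 0 real), δ > 0 and θ_δ = (i+δ)/|i+δ|. Then
det(Re(θ_δ·M_n)) = (k²·β_n² − γ²·α_n²·δ²)/(κ⁴·(1+δ²)),
where Re M := (M + M*)/2. -/
theorem stmt_4 (ω ε μ θ φ : ℝ) (hω : 0 < ω) (hε : 0 < ε) (hμ : 0 < μ)
    (hθ : θ ∈ Set.Ioo (-(π / 2)) (π / 2)) (hφ : φ ∈ Set.Ioo (-(π / 2)) (π / 2))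
    (k γ κ2 : ℝ)
    (hk : k = ω * Real.sqrt (ε * μ)) (hγ : γ = k * Real.sin φ)
    (hκ2 : κ2 = k ^ 2 * Real.cos φ ^ 2)
    (n : ℤ) (an : ℝ) (han : an = (n : ℝ) + k * Real.sin θ * Real.cos φ)
    (hle : an ^ 2 ≤ κ2)
    (bn : ℝ) (hbn : bn = Real.sqrt (κ2 - an ^ 2))
    (δ : ℝ) (hδ : 0 < δ)
    (θδ : ℂ) (hθδ : θδ = (Complex.I + (δ : ℂ)) / ((‖Complex.I + (δ : ℂ)‖ : ℝ) : ℂ))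
    (M : Matrix (Fin 2) (Fin 2) ℂ)
    (hM : M = (κ2 : ℂ)⁻¹ • !![-Complex.I * ((ω * ε : ℝ) : ℂ) * (bn : ℂ),
        Complex.I * (γ : ℂ) * (an : ℂ);
        -(Complex.I * (γ : ℂ) * (an : ℂ)),
        -Complex.I * ((ω * μ : ℝ) : ℂ) * (bn : ℂ)]) :
    (((1 : ℂ) / 2) • (θδ • M + (θδ • M)ᴴ)).det
      = (((k ^ 2 * bn ^ 2 - γ ^ 2 * an ^ 2 * δ ^ 2) / (κ2 ^ 2 * (1 + δ ^ 2)) : ℝ) : ℂ) := by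
  have hkpos : 0 < k := by
    rw [hk]; positivity
  have hcφ : 0 < Real.cos φ := Real.cos_pos_of_mem_Ioo hφ
  have hκpos : 0 < κ2 := by rw [hκ2]; positivity
  have hbn2 : bn ^ 2 = κ2 - an ^ 2 := by
    rw [hbn, Real.sq_sqrt (by linarith)]
  have hk2 : k ^ 2 = ω ^ 2 * (ε * μ) := by
    rw [hk, mul_pow, Real.sq_sqrt (by positivity)]
  have habs : ‖Complex.I + (δ : ℂ)‖ = Real.sqrt (1 + δ ^ 2) := by
    rw [Complex.norm_def, Complex.normSq_apply]
    simp [Complex.add_re, Complex.add_im]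
    ring_nf
  have hs2 : Real.sqrt (1 + δ ^ 2) ^ 2 = 1 + δ ^ 2 := Real.sq_sqrt (by positivity)
  have hsne : Real.sqrt (1 + δ ^ 2) ≠ 0 := by positivity
  set s := Real.sqrt (1 + δ ^ 2) with hsdef
  subst hθδ hM
  rw [habs]
  rw [det_fin_two]
  simp [conjTranspose_apply, Matrix.smul_apply, Matrix.add_apply, Complex.ext_iff,
    Complex.div_re, Complex.div_im, Complex.normSq_apply, ← Complex.ofReal_pow]
  constructor
  · have e1 : s / (s * s) = s⁻¹ := by field_simp
    have e2 : -s / (s * s) = -s⁻¹ := by field_simp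
    have e3 : δ * s / (s * s) = δ * s⁻¹ := by rw [mul_div_assoc, e1]
    simp only [e1, e2, e3]
    have hu2 : s⁻¹ ^ 2 = (1 + δ ^ 2)⁻¹ := by rw [← hs2]; simp
    ring_nf
    rw [hu2, hk2]
    have h1 : (1 : ℝ) + δ ^ 2 ≠ 0 := by positivity
    field_simp
    ring
  · field_simp
    ring
end

section
/- Let n ∈ ℤ with α_n² ≥ k², so that β_n = i·√(α_n² − κ²) is purely imaginary. Then k²·(α_n² − κ²) − γ²·α_n² = (k² − γ²)·(α_n² − k²) ≥ 0, and for every θ ∈ ℂ with Re θ ≥ 0 the Hermitian matrix Re(θ·M_n) is positive semidefinite, i.e. Re(θ · ((M_n ξ) · ξ̄)) ≥ 0 for all ξ ∈ ℂ². -/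
/-!
Since `β_n = i·s` with `s = √(α_n² - κ²)` real, `M_n` is `κ⁻²` times the Hermitian matrix
`[[ωεs, iγα_n], [-iγα_n, ωμs]]`. Its diagonal is nonnegative and, as `ω²εμ = k²`, its determinant is
`k²(α_n² - κ²) - γ²α_n² = κ²(α_n² - k²) ≥ 0`, so it is positive semidefinite. For such a matrix the
quadratic form `(M_n ξ)·ξ̄` is a nonnegative real, hence `Re(θ·(M_n ξ)·ξ̄) = Re θ·(M_n ξ)·ξ̄ ≥ 0`.
-/

open Real Matrix

open scoped ComplexOrder ComplexConjugate

theorem two_mul_mul_mul_le_of_sq_le {a b t : ℝ} (ha : 0 ≤ a) (hb : 0 ≤ b) (ht : t ^ 2 ≤ a * b)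
    (u v : ℝ) : 2 * t * u * v ≤ a * u ^ 2 + b * v ^ 2 := by
  rcases ha.eq_or_lt with rfl | ha
  · obtain rfl : t = 0 := by nlinarith
    nlinarith [mul_nonneg hb (sq_nonneg v)]
  · have h : a * (a * u ^ 2 + b * v ^ 2 - 2 * t * u * v) =
        (a * u - t * v) ^ 2 + (a * b - t ^ 2) * v ^ 2 := by
      ring
    have : 0 ≤ a * (a * u ^ 2 + b * v ^ 2 - 2 * t * u * v) := h ▸ by positivity
    linarith [(mul_nonneg_iff_of_pos_left ha).1 this]

namespace Matrix

variable {𝕜 : Type*} [RCLike 𝕜]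

open RCLike in
theorem posSemidef_fin_two {a b : ℝ} {z : 𝕜} (ha : 0 ≤ a) (hb : 0 ≤ b) (hz : ‖z‖ ^ 2 ≤ a * b) :
    (!![(a : 𝕜), z; conj z, (b : 𝕜)]).PosSemidef := by
  refine PosSemidef.of_dotProduct_mulVec_nonneg ?_ fun x ↦ ?_
  · ext i j
    fin_cases i <;> fin_cases j <;> simp
  set w := conj (x 0) * z * x 1
  have hform : star x ⬝ᵥ (!![(a : 𝕜), z; conj z, (b : 𝕜)] *ᵥ x) =
      ((a * ‖x 0‖ ^ 2 + b * ‖x 1‖ ^ 2 + 2 * re w : ℝ) : 𝕜) := by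
    have h2re : ((2 * re w : ℝ) : 𝕜) = w + conj w := by
      rw [add_conj]; push_cast; ring
    simp only [dotProduct, mulVec, Fin.sum_univ_two, Pi.star_apply, RCLike.star_def, of_apply,
      cons_val', cons_val_zero, cons_val_one, empty_val', cons_val_fin_one]
    rw [ofReal_add, ofReal_add, ofReal_mul, ofReal_mul, ofReal_pow, ofReal_pow, h2re,
      ← RCLike.conj_mul, ← RCLike.conj_mul]
    simp only [w, map_mul, conj_conj]
    ring
  have hre : -re w ≤ ‖z‖ * ‖x 0‖ * ‖x 1‖ :=
    calc -re w ≤ ‖w‖ := (neg_le_abs _).trans (abs_re_le_norm _)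
      _ = ‖z‖ * ‖x 0‖ * ‖x 1‖ := by simp only [w, norm_mul, norm_conj]; ring
  rw [hform, ofReal_nonneg]
  linarith [two_mul_mul_mul_le_of_sq_le ha hb hz ‖x 0‖ ‖x 1‖]

theorem PosSemidef.re_mul_mulVec_dotProduct_star_nonneg {n : Type*} [Fintype n]
    {A : Matrix n n 𝕜} (hA : A.PosSemidef) {θ : 𝕜} (hθ : 0 ≤ RCLike.re θ) (ξ : n → 𝕜) :
    0 ≤ RCLike.re (θ * (A *ᵥ ξ ⬝ᵥ star ξ)) := by
  obtain ⟨hq, hq'⟩ := RCLike.nonneg_iff.1 (dotProduct_comm (A *ᵥ ξ) (star ξ) ▸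
    hA.dotProduct_mulVec_nonneg ξ)
  rw [RCLike.mul_re, hq', mul_zero, sub_zero]
  exact mul_nonneg hθ hq

end Matrix

theorem stmt_5_general (ω ε μ φ : ℝ) (hω : 0 < ω) (hε : 0 < ε) (hμ : 0 < μ)
    (k γ κ2 : ℝ)
    (hk : k = ω * Real.sqrt (ε * μ)) (hγ : γ = k * Real.sin φ)
    (hκ2 : κ2 = k ^ 2 * Real.cos φ ^ 2)
    (an : ℝ)
    (hge : k ^ 2 ≤ an ^ 2)
    (bn : ℂ) (hbn : bn = Complex.I * ((Real.sqrt (an ^ 2 - κ2) : ℝ) : ℂ)) :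
    k ^ 2 * (an ^ 2 - κ2) - γ ^ 2 * an ^ 2 = (k ^ 2 - γ ^ 2) * (an ^ 2 - k ^ 2) ∧
    0 ≤ (k ^ 2 - γ ^ 2) * (an ^ 2 - k ^ 2) ∧
    ∀ θc : ℂ, 0 ≤ θc.re → ∀ ξ : Fin 2 → ℂ,
      0 ≤ (θc * (Matrix.mulVec
          ((κ2 : ℂ)⁻¹ • !![-Complex.I * ((ω * ε : ℝ) : ℂ) * bn,
              Complex.I * (γ : ℂ) * (an : ℂ);
              -(Complex.I * (γ : ℂ) * (an : ℂ)),
              -Complex.I * ((ω * μ : ℝ) : ℂ) * bn]) ξ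
        ⬝ᵥ star ξ)).re := by
  have hκ : k ^ 2 - γ ^ 2 = κ2 := by
    rw [hγ, hκ2]; linear_combination -k ^ 2 * sin_sq_add_cos_sq φ
  have hκ0 : 0 ≤ κ2 := hκ2 ▸ by positivity
  have hdet : k ^ 2 * (an ^ 2 - κ2) - γ ^ 2 * an ^ 2 = (k ^ 2 - γ ^ 2) * (an ^ 2 - k ^ 2) := by
    linear_combination k ^ 2 * hκ
  have hdet_nonneg : 0 ≤ (k ^ 2 - γ ^ 2) * (an ^ 2 - k ^ 2) :=
    hκ ▸ mul_nonneg hκ0 (sub_nonneg.2 hge)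
  refine ⟨hdet, hdet_nonneg, fun θc hθc ξ ↦ ?_⟩
  set s := √(an ^ 2 - κ2)
  have hs : s ^ 2 = an ^ 2 - κ2 := sq_sqrt (by linarith [sq_nonneg γ])
  have hk2 : k ^ 2 = ω * ε * (ω * μ) := by rw [hk, mul_pow, sq_sqrt (by positivity)]; ring
  have hM : !![-Complex.I * ((ω * ε : ℝ) : ℂ) * bn, Complex.I * (γ : ℂ) * (an : ℂ);
      -(Complex.I * (γ : ℂ) * (an : ℂ)), -Complex.I * ((ω * μ : ℝ) : ℂ) * bn] =
      !![((ω * ε * s : ℝ) : ℂ), Complex.I * (γ : ℂ) * (an : ℂ);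
        conj (Complex.I * (γ : ℂ) * (an : ℂ)), ((ω * μ * s : ℝ) : ℂ)] := by
    ext i j
    fin_cases i <;> fin_cases j <;> simp [hbn, Complex.ext_iff]
  rw [hM, ← Complex.ofReal_inv]
  refine PosSemidef.re_mul_mulVec_dotProduct_star_nonneg
    (.smul (posSemidef_fin_two (a := ω * ε * s) (b := ω * μ * s) (by positivity) (by positivity) ?_)
      (Complex.zero_le_real.2 (inv_nonneg.2 hκ0))) hθc ξ
  simp only [norm_mul, Complex.norm_I, Complex.norm_real, Real.norm_eq_abs, one_mul, mul_pow, sq_abs]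
  calc γ ^ 2 * an ^ 2 ≤ k ^ 2 * s ^ 2 := by rw [hs]; linarith
    _ = ω * ε * s * (ω * μ * s) := by rw [hk2]; ring

/-- With the conical diffraction parameters, let n ∈ ℤ with
α_n² ≥ k², so β_n = i·√(α_n² − κ²) is purely imaginary. Then
k²·(α_n² − κ²) − γ²·α_n² = (k² − γ²)·(α_n² − k²) ≥ 0, and for every θ ∈ ℂ with
Re θ ≥ 0 the matrix Re(θ·M_n) is positive semidefinite, i.e.
Re(θ·((M_n ξ)·ξ̄)) ≥ 0 for all ξ ∈ ℂ². -/
theorem stmt_5 (ω ε μ θ φ : ℝ) (hω : 0 < ω) (hε : 0 < ε) (hμ : 0 < μ)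
    (hθ : θ ∈ Set.Ioo (-(π / 2)) (π / 2)) (hφ : φ ∈ Set.Ioo (-(π / 2)) (π / 2))
    (k γ κ2 : ℝ)
    (hk : k = ω * Real.sqrt (ε * μ)) (hγ : γ = k * Real.sin φ)
    (hκ2 : κ2 = k ^ 2 * Real.cos φ ^ 2)
    (n : ℤ) (an : ℝ) (han : an = (n : ℝ) + k * Real.sin θ * Real.cos φ)
    (hge : k ^ 2 ≤ an ^ 2)
    (bn : ℂ) (hbn : bn = Complex.I * ((Real.sqrt (an ^ 2 - κ2) : ℝ) : ℂ)) :
    k ^ 2 * (an ^ 2 - κ2) - γ ^ 2 * an ^ 2 = (k ^ 2 - γ ^ 2) * (an ^ 2 - k ^ 2) ∧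
    0 ≤ (k ^ 2 - γ ^ 2) * (an ^ 2 - k ^ 2) ∧
    ∀ θc : ℂ, 0 ≤ θc.re → ∀ ξ : Fin 2 → ℂ,
      0 ≤ (θc * (Matrix.mulVec
          ((κ2 : ℂ)⁻¹ • !![-Complex.I * ((ω * ε : ℝ) : ℂ) * bn,
              Complex.I * (γ : ℂ) * (an : ℂ);
              -(Complex.I * (γ : ℂ) * (an : ℂ)),
              -Complex.I * ((ω * μ : ℝ) : ℂ) * bn]) ξ
        ⬝ᵥ star ξ)).re :=
  stmt_5_general ω ε μ φ hω hε hμ k γ κ2 hk hγ hκ2 an hge bn hbn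
end

section
/- For every finitely supported family w : ℤ → ℂ², writing w_n = (w_{n,1}, w_{n,2}), one has Σ_{n∈ℤ} Im((M_n w_n) · w̄_n) = −(ω/κ²) · Σ_{n : α_n² ≤ κ²} β_n·(ε·|w_{n,1}|² + μ·|w_{n,2}|²) ≤ 0. -/
open Real Matrix

/-- With the conical diffraction parameters, for every finitely
supported family w : ℤ → ℂ²,
Σ_{n∈ℤ} Im((M_n w_n)·w̄_n)
  = −(ω/κ²)·Σ_{n : α_n² ≤ κ²} β_n·(ε·|w_{n,1}|² + μ·|w_{n,2}|²) ≤ 0. -/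
theorem stmt_8 (ω ε μ θ φ : ℝ) (hω : 0 < ω) (hε : 0 < ε) (hμ : 0 < μ)
    (hθ : θ ∈ Set.Ioo (-(π / 2)) (π / 2)) (hφ : φ ∈ Set.Ioo (-(π / 2)) (π / 2))
    (k γ κ2 : ℝ)
    (hk : k = ω * Real.sqrt (ε * μ)) (hγ : γ = k * Real.sin φ)
    (hκ2 : κ2 = k ^ 2 * Real.cos φ ^ 2)
    (a : ℤ → ℝ) (ha : ∀ n : ℤ, a n = (n : ℝ) + k * Real.sin θ * Real.cos φ)
    (B : ℤ → ℂ)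
    (hB : ∀ n : ℤ, B n = if (a n) ^ 2 ≤ κ2
        then ((Real.sqrt (κ2 - (a n) ^ 2) : ℝ) : ℂ)
        else Complex.I * ((Real.sqrt ((a n) ^ 2 - κ2) : ℝ) : ℂ))
    (M : ℤ → Matrix (Fin 2) (Fin 2) ℂ)
    (hM : ∀ n : ℤ, M n = (κ2 : ℂ)⁻¹ •
        !![-Complex.I * ((ω * ε : ℝ) : ℂ) * B n,
           Complex.I * (γ : ℂ) * ((a n : ℝ) : ℂ);
           -(Complex.I * (γ : ℂ) * ((a n : ℝ) : ℂ)),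
           -Complex.I * ((ω * μ : ℝ) : ℂ) * B n])
    (w : ℤ → Fin 2 → ℂ) (hw : (Function.support w).Finite) :
    (∑' n : ℤ, (Matrix.mulVec (M n) (w n) ⬝ᵥ star (w n)).im)
      = -(ω / κ2) * ∑' n : ℤ,
          (if (a n) ^ 2 ≤ κ2
            then Real.sqrt (κ2 - (a n) ^ 2) * (ε * ‖w n 0‖ ^ 2 + μ * ‖w n 1‖ ^ 2)
            else 0) ∧
    (∑' n : ℤ, (Matrix.mulVec (M n) (w n) ⬝ᵥ star (w n)).im) ≤ 0 := by
  have hk0 : 0 < k := by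
    rw [hk]; exact mul_pos hω (Real.sqrt_pos.mpr (mul_pos hε hμ))
  have hc : 0 < Real.cos φ := Real.cos_pos_of_mem_Ioo (by simpa using hφ)
  have hκ : 0 < κ2 := by rw [hκ2]; positivity
  have key : ∀ n : ℤ, (Matrix.mulVec (M n) (w n) ⬝ᵥ star (w n)).im
      = -(ω / κ2) * (if (a n) ^ 2 ≤ κ2
          then Real.sqrt (κ2 - (a n) ^ 2) * (ε * ‖w n 0‖ ^ 2 + μ * ‖w n 1‖ ^ 2)
          else 0) := by
    intro n
    rw [hM n, hB n, Matrix.smul_mulVec, smul_dotProduct, smul_eq_mul, ← Complex.ofReal_inv]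
    by_cases h : (a n) ^ 2 ≤ κ2
    · simp only [if_pos h]
      simp [Matrix.mulVec, dotProduct, Fin.sum_univ_two,
        Complex.sq_norm, Complex.normSq_apply, Complex.add_im, Complex.mul_im, Complex.mul_re]
      field_simp
      ring
    · simp only [if_neg h]
      simp [Matrix.mulVec, dotProduct, Fin.sum_univ_two, Complex.add_im,
        Complex.mul_im, Complex.mul_re, mul_comm, mul_assoc, mul_left_comm]
      ring_nf
      simp
  have h1 : (∑' n : ℤ, (Matrix.mulVec (M n) (w n) ⬝ᵥ star (w n)).im)
      = -(ω / κ2) * ∑' n : ℤ,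
          (if (a n) ^ 2 ≤ κ2
            then Real.sqrt (κ2 - (a n) ^ 2) * (ε * ‖w n 0‖ ^ 2 + μ * ‖w n 1‖ ^ 2)
            else 0) := by
    rw [tsum_congr key, tsum_mul_left]
  refine ⟨h1, ?_⟩
  rw [h1]
  have hS : (0:ℝ) ≤ ∑' n : ℤ,
      (if (a n) ^ 2 ≤ κ2
        then Real.sqrt (κ2 - (a n) ^ 2) * (ε * ‖w n 0‖ ^ 2 + μ * ‖w n 1‖ ^ 2)
        else 0) := by
    refine tsum_nonneg fun n => ?_
    split
    · positivity
    · exact le_refl 0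
  have hω' : (0:ℝ) ≤ ω / κ2 := le_of_lt (div_pos hω hκ)
  rw [neg_mul]
  exact neg_nonpos_of_nonneg (mul_nonneg hω' hS)
end

section
/- Let b ∈ ℝ and ε₀ > 0, and let A : ℤ → ℂ be finitely supported. Define e(x₁, x₂) = Σ_{n∈ℤ} A_n·exp(i·(α_n·x₁ + β_n·x₂)). Then ∫₀^{2π} ∫_{b−ε₀}^{b} |e(x₁,x₂)|² dx₂ dx₁ = 2π · Σ_{n∈ℤ} c_n·|A_n|², where c_n = ε₀ if α_n² ≤ κ², and c_n = (exp(−2·t_n·(b−ε₀)) − exp(−2·t_n·b))/(2·t_n) with t_n = √(α_n² − κ²) if α_n² > κ². -/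
open Real

/-- With the conical diffraction parameters (α_n = n + k·sinθ·cosφ,
κ² = k²cos²φ, β_n as usual), let b ∈ ℝ, ε₀ > 0 and A : ℤ → ℂ finitely supported,
e(x₁,x₂) = Σ_n A_n·exp(i(α_n x₁ + β_n x₂)). Then
∫₀^{2π} ∫_{b−ε₀}^{b} |e|² dx₂ dx₁ = 2π·Σ_n c_n·|A_n|², where c_n = ε₀ if α_n² ≤ κ²
and c_n = (exp(−2t_n(b−ε₀)) − exp(−2t_n b))/(2t_n), t_n = √(α_n² − κ²), otherwise. -/
theorem stmt_11 (k θ φ : ℝ) (hk : 0 < k)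
    (hθ : θ ∈ Set.Ioo (-(π / 2)) (π / 2)) (hφ : φ ∈ Set.Ioo (-(π / 2)) (π / 2))
    (κ2 : ℝ) (hκ2 : κ2 = k ^ 2 * Real.cos φ ^ 2)
    (a : ℤ → ℝ) (ha : ∀ n : ℤ, a n = (n : ℝ) + k * Real.sin θ * Real.cos φ)
    (B : ℤ → ℂ)
    (hB : ∀ n : ℤ, B n = if (a n) ^ 2 ≤ κ2
        then ((Real.sqrt (κ2 - (a n) ^ 2) : ℝ) : ℂ)
        else Complex.I * ((Real.sqrt ((a n) ^ 2 - κ2) : ℝ) : ℂ))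
    (b ε₀ : ℝ) (hε₀ : 0 < ε₀)
    (A : ℤ → ℂ) (hA : (Function.support A).Finite)
    (e : ℝ → ℝ → ℂ)
    (he : ∀ x₁ x₂ : ℝ, e x₁ x₂ = ∑' n : ℤ,
        A n * Complex.exp (Complex.I * (((a n : ℝ) : ℂ) * (x₁ : ℂ) + B n * (x₂ : ℂ))))
    (c : ℤ → ℝ)
    (hc : ∀ n : ℤ, c n = if (a n) ^ 2 ≤ κ2 then ε₀
        else (Real.exp (-2 * Real.sqrt ((a n) ^ 2 - κ2) * (b - ε₀))
            - Real.exp (-2 * Real.sqrt ((a n) ^ 2 - κ2) * b))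
          / (2 * Real.sqrt ((a n) ^ 2 - κ2))) :
    (∫ x₁ in (0 : ℝ)..(2 * π), ∫ x₂ in (b - ε₀)..b, ‖e x₁ x₂‖ ^ 2)
      = 2 * π * ∑' n : ℤ, c n * ‖A n‖ ^ 2 := by
  classical
  set s : Finset ℤ := hA.toFinset with hs
  have hsmem : ∀ {n : ℤ}, n ∉ s → A n = 0 := by
    intro n hn
    by_contra h
    exact hn (hA.mem_toFinset.mpr h)
  have he' : ∀ x₁ x₂ : ℝ, e x₁ x₂
      = ∑ n ∈ s, A n * Complex.exp (Complex.I * (((a n : ℝ) : ℂ) * x₁ + B n * x₂)) := by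
    intro x₁ x₂; rw [he]
    exact tsum_eq_sum (fun n hn => by simp [hsmem hn])
  -- key pointwise decomposition
  have key : ∀ x₁ x₂ : ℝ, (e x₁ x₂) * (starRingEnd ℂ) (e x₁ x₂)
      = ∑ n ∈ s, ∑ m ∈ s, (A n * (starRingEnd ℂ) (A m)) *
          (Complex.exp (Complex.I * ((n : ℂ) - (m : ℂ)) * x₁) *
            Complex.exp (Complex.I * (B n - (starRingEnd ℂ) (B m)) * x₂)) := by
    intro x₁ x₂
    rw [he' x₁ x₂, map_sum, Finset.sum_mul_sum]
    refine Finset.sum_congr rfl fun n _ => Finset.sum_congr rfl fun m _ => ?_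
    rw [map_mul, ← Complex.exp_conj, mul_mul_mul_comm, ← Complex.exp_add, ← Complex.exp_add]
    congr 1
    simp only [map_add, map_mul, Complex.conj_I, Complex.conj_ofReal]
    rw [ha n, ha m]
    push_cast
    ring
  set K : ℤ → ℤ → ℂ := fun n m =>
    ∫ x₂ in (b - ε₀)..b, Complex.exp (Complex.I * (B n - (starRingEnd ℂ) (B m)) * x₂) with hK
  -- inner integral
  have inner : ∀ (n m : ℤ) (x₁ : ℝ),
      (∫ x₂ in (b - ε₀)..b, (A n * (starRingEnd ℂ) (A m)) *
          (Complex.exp (Complex.I * ((n : ℂ) - (m : ℂ)) * x₁) *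
            Complex.exp (Complex.I * (B n - (starRingEnd ℂ) (B m)) * x₂)))
      = (A n * (starRingEnd ℂ) (A m) * K n m) *
          Complex.exp (Complex.I * ((n : ℂ) - (m : ℂ)) * x₁) := by
    intro n m x₁
    simp_rw [← mul_assoc]
    rw [intervalIntegral.integral_const_mul]
    ring
  -- value of K on diagonal
  have hKdiag : ∀ n : ℤ, K n n = ((c n : ℝ) : ℂ) := by
    intro n
    rw [hK]
    by_cases h : (a n) ^ 2 ≤ κ2
    · simp only [hB n, if_pos h, Complex.conj_ofReal, sub_self, mul_zero, zero_mul,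
        Complex.exp_zero]
      rw [intervalIntegral.integral_const]
      rw [hc n, if_pos h]
      simp [Complex.real_smul]
    · have hlt : 0 < (a n) ^ 2 - κ2 := by linarith [not_le.mp h]
      set t : ℝ := Real.sqrt ((a n) ^ 2 - κ2) with ht
      have htpos : 0 < t := Real.sqrt_pos.mpr hlt
      have hBn : B n = Complex.I * (t : ℂ) := by rw [hB n, if_neg h]
      have hcoef : Complex.I * (B n - (starRingEnd ℂ) (B n)) = ((-(2 * t) : ℝ) : ℂ) := by
        rw [hBn]
        simp only [map_mul, Complex.conj_I, Complex.conj_ofReal]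
        rw [show Complex.I * (Complex.I * (t : ℂ) - -Complex.I * (t : ℂ))
            = Complex.I * Complex.I * (2 * (t : ℂ)) from by ring, Complex.I_mul_I]
        push_cast
        ring
      simp_rw [hcoef]
      rw [integral_exp_mul_complex (by
        simp only [ne_eq, Complex.ofReal_eq_zero]
        intro hcontra
        nlinarith)]
      rw [hc n, if_neg h]
      have e1 : ((-(2 * t) : ℝ) : ℂ) * ((b : ℝ) : ℂ) = ((-(2 * t) * b : ℝ) : ℂ) := by push_cast; ring
      have e2 : ((-(2 * t) : ℝ) : ℂ) * (((b - ε₀) : ℝ) : ℂ) = ((-(2 * t) * (b - ε₀) : ℝ) : ℂ) := by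
        push_cast; ring
      rw [e1, e2, ← Complex.ofReal_exp, ← Complex.ofReal_exp, ← Complex.ofReal_sub,
        ← Complex.ofReal_div]
      congr 1
      have h2t : (2 : ℝ) * t ≠ 0 := by positivity
      rw [div_eq_div_iff (neg_ne_zero.mpr h2t) h2t]
      rw [← ht]
      ring
  -- outer integral per (n,m)
  have hJ : ∀ n m : ℤ,
      (∫ x₁ in (0 : ℝ)..(2 * π), (A n * (starRingEnd ℂ) (A m) * K n m) *
          Complex.exp (Complex.I * ((n : ℂ) - (m : ℂ)) * x₁))
      = if n = m then ((2 * π * (c n * ‖A n‖ ^ 2) : ℝ) : ℂ) else 0 := by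
    intro n m
    rw [intervalIntegral.integral_const_mul]
    by_cases hnm : n = m
    · subst hnm
      simp only [sub_self, mul_zero, zero_mul, Complex.exp_zero, if_pos]
      rw [intervalIntegral.integral_const, hKdiag n, Complex.mul_conj']
      push_cast
      ring_nf
      simp [Complex.real_smul]
      ring
    · have hd : ((n : ℂ) - (m : ℂ)) ≠ 0 := by
        simp only [ne_eq, sub_eq_zero]
        exact_mod_cast fun hh => hnm (by exact_mod_cast hh)
      have hc0 : Complex.I * ((n : ℂ) - (m : ℂ)) ≠ 0 := mul_ne_zero Complex.I_ne_zero hd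
      have : (∫ x₁ in (0 : ℝ)..(2 * π),
          Complex.exp (Complex.I * ((n : ℂ) - (m : ℂ)) * x₁)) = 0 := by
        rw [integral_exp_mul_complex hc0]
        have h2 : Complex.I * ((n : ℂ) - (m : ℂ)) * ((2 * π : ℝ) : ℂ)
            = ((n - m : ℤ) : ℂ) * (2 * π * Complex.I) := by push_cast; ring
        rw [h2, Complex.exp_int_mul_two_pi_mul_I]
        simp
      rw [this, mul_zero, if_neg hnm]
  -- integrability helpers
  have hcont2 : ∀ (C d : ℂ), Continuous (fun x : ℝ => C * Complex.exp (d * x)) := by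
    intro C d
    exact continuous_const.mul (Complex.continuous_exp.comp (continuous_const.mul
      Complex.continuous_ofReal))
  have hcont3 : ∀ (C d₁ d₂ : ℂ) (x₁ : ℝ), Continuous (fun x₂ : ℝ =>
      C * (Complex.exp (d₁ * x₁) * Complex.exp (d₂ * x₂))) := by
    intro C d₁ d₂ x₁
    exact continuous_const.mul (continuous_const.mul (Complex.continuous_exp.comp
      (continuous_const.mul Complex.continuous_ofReal)))
  -- step 1 : inner integral of |e|² decomposition
  have step1 : ∀ x₁ : ℝ,
      (∫ x₂ in (b - ε₀)..b, (e x₁ x₂) * (starRingEnd ℂ) (e x₁ x₂))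
      = ∑ n ∈ s, ∑ m ∈ s, (A n * (starRingEnd ℂ) (A m) * K n m) *
          Complex.exp (Complex.I * ((n : ℂ) - (m : ℂ)) * x₁) := by
    intro x₁
    simp only [key]
    rw [intervalIntegral.integral_finset_sum (fun n _ =>
      (continuous_finset_sum s fun m _ => hcont3 _ _ _ x₁).intervalIntegrable _ _)]
    refine Finset.sum_congr rfl fun n _ => ?_
    rw [intervalIntegral.integral_finset_sum (fun m _ =>
      (hcont3 _ _ _ x₁).intervalIntegrable _ _)]
    exact Finset.sum_congr rfl fun m _ => inner n m x₁
  -- main computation of the complex double integral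
  have main : (∫ x₁ in (0 : ℝ)..(2 * π), ∫ x₂ in (b - ε₀)..b,
        (e x₁ x₂) * (starRingEnd ℂ) (e x₁ x₂))
      = ∑ n ∈ s, ((2 * π * (c n * ‖A n‖ ^ 2) : ℝ) : ℂ) := by
    rw [intervalIntegral.integral_congr (fun x₁ _ => step1 x₁)]
    rw [intervalIntegral.integral_finset_sum (fun n _ =>
      (continuous_finset_sum s fun m _ => hcont2 _ _).intervalIntegrable _ _)]
    refine Finset.sum_congr rfl fun n hn => ?_
    rw [intervalIntegral.integral_finset_sum (fun m _ => (hcont2 _ _).intervalIntegrable _ _)]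
    calc (∑ m ∈ s, ∫ x₁ in (0 : ℝ)..(2 * π), (A n * (starRingEnd ℂ) (A m) * K n m) *
            Complex.exp (Complex.I * ((n : ℂ) - (m : ℂ)) * x₁))
        = ∑ m ∈ s, if n = m then ((2 * π * (c n * ‖A n‖ ^ 2) : ℝ) : ℂ) else 0 :=
          Finset.sum_congr rfl fun m _ => hJ n m
      _ = ((2 * π * (c n * ‖A n‖ ^ 2) : ℝ) : ℂ) := by
          rw [Finset.sum_ite_eq s n (fun _ => ((2 * π * (c n * ‖A n‖ ^ 2) : ℝ) : ℂ)), if_pos hn]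
  -- relate to real integral
  have hre : (((∫ x₁ in (0 : ℝ)..(2 * π), ∫ x₂ in (b - ε₀)..b, ‖e x₁ x₂‖ ^ 2) : ℝ) : ℂ)
      = ∫ x₁ in (0 : ℝ)..(2 * π), ∫ x₂ in (b - ε₀)..b,
          (e x₁ x₂) * (starRingEnd ℂ) (e x₁ x₂) := by
    rw [← intervalIntegral.integral_ofReal]
    refine intervalIntegral.integral_congr fun x₁ _ => ?_
    rw [← intervalIntegral.integral_ofReal]
    refine intervalIntegral.integral_congr fun x₂ _ => ?_
    rw [Complex.mul_conj']
    push_cast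
    ring
  -- tsum to finite sum
  have htsum : (∑' n : ℤ, c n * ‖A n‖ ^ 2) = ∑ n ∈ s, c n * ‖A n‖ ^ 2 :=
    tsum_eq_sum (fun n hn => by simp [hsmem hn])
  have : (((∫ x₁ in (0 : ℝ)..(2 * π), ∫ x₂ in (b - ε₀)..b, ‖e x₁ x₂‖ ^ 2) : ℝ) : ℂ)
      = ((2 * π * ∑' n : ℤ, c n * ‖A n‖ ^ 2 : ℝ) : ℂ) := by
    rw [hre, main, htsum]
    push_cast
    rw [Finset.mul_sum]
  exact_mod_cast this
end

section
/- Let b ∈ ℝ and ε₀ > 0. There exists a constant C > 0, depending only on k, θ, φ, b, ε₀ (and not on A), such that for every finitely supported A : ℤ → ℂ, with e(x₁, x₂) = Σ_{n∈ℤ} A_n·exp(i·(α_n·x₁ + β_n·x₂)), one has ∫₀^{2π} |Σ_{n∈𝓐} A_n·exp(i·(α_n·x₁ + β_n·b))|² dx₁ ≤ C · ∫₀^{2π} ∫_{b−ε₀}^{b} |e(x₁,x₂)|² dx₂ dx₁. -/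
open Real MeasureTheory intervalIntegral

lemma ortho (m n : ℤ) :
    (∫ x : ℝ in (0:ℝ)..(2*π), Complex.exp (Complex.I * ((m : ℂ) - n) * x))
      = if m = n then ((2*π : ℝ) : ℂ) else 0 := by
  rcases eq_or_ne m n with h | h
  · subst h
    simp [Complex.exp_zero, two_mul]
  · have hd : (Complex.I * ((m : ℂ) - n)) ≠ 0 := by
      refine mul_ne_zero Complex.I_ne_zero ?_
      rw [sub_ne_zero]
      exact_mod_cast h
    rw [if_neg h, integral_exp_mul_complex hd]
    have h2 : Complex.I * ((m : ℂ) - n) * ((2*π :ℝ) : ℂ) = ((m - n : ℤ) : ℂ) * (2 * π * Complex.I) := by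
      push_cast; ring
    rw [h2, Complex.exp_int_mul_two_pi_mul_I]
    simp

lemma parseval_core (s : Finset ℤ) (c : ℤ → ℂ) :
    ∫ x : ℝ in (0:ℝ)..(2*π), ‖∑ n ∈ s, c n * Complex.exp (Complex.I * ((n:ℂ) * x))‖ ^ 2
      = 2 * π * ∑ n ∈ s, ‖c n‖ ^ 2 := by
  have hpt : ∀ x : ℝ, ‖∑ n ∈ s, c n * Complex.exp (Complex.I * ((n:ℂ) * x))‖ ^ 2
      = ∑ n ∈ s, ∑ m ∈ s,
          (c n * (starRingEnd ℂ) (c m) * Complex.exp (Complex.I * ((n:ℂ) - m) * x)).re := by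
    intro x
    have h1 : ∀ z : ℂ, ‖z‖ ^ 2 = (z * (starRingEnd ℂ) z).re := by
      intro z
      rw [Complex.mul_conj]
      simp [Complex.sq_norm]
    rw [h1]
    have h2 : (∑ n ∈ s, c n * Complex.exp (Complex.I * ((n:ℂ) * x)))
        * (starRingEnd ℂ) (∑ n ∈ s, c n * Complex.exp (Complex.I * ((n:ℂ) * x)))
        = ∑ n ∈ s, ∑ m ∈ s,
          c n * (starRingEnd ℂ) (c m) * Complex.exp (Complex.I * ((n:ℂ) - m) * x) := by
      rw [map_sum, Finset.sum_mul_sum]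
      refine Finset.sum_congr rfl fun n _ => Finset.sum_congr rfl fun m _ => ?_
      have hE : Complex.exp (Complex.I * ((n:ℂ) * x))
          * Complex.exp ((starRingEnd ℂ) (Complex.I * ((m:ℂ) * x)))
          = Complex.exp (Complex.I * ((n:ℂ) - m) * x) := by
        rw [← Complex.exp_add]
        congr 1
        simp [map_mul, Complex.conj_I, Complex.conj_ofReal]
        ring
      rw [map_mul, ← Complex.exp_conj]
      calc c n * Complex.exp (Complex.I * ((n:ℂ) * x))
            * ((starRingEnd ℂ) (c m) * Complex.exp ((starRingEnd ℂ) (Complex.I * ((m:ℂ) * x))))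
          = c n * (starRingEnd ℂ) (c m)
            * (Complex.exp (Complex.I * ((n:ℂ) * x))
              * Complex.exp ((starRingEnd ℂ) (Complex.I * ((m:ℂ) * x)))) := by ring
        _ = _ := by rw [hE]
    rw [h2, Complex.re_sum]
    exact Finset.sum_congr rfl fun n _ => (Complex.re_sum _ _).symm ▸ rfl
  simp only [hpt]
  have hint : ∀ (n m : ℤ), IntervalIntegrable
      (fun x : ℝ => c n * (starRingEnd ℂ) (c m) * Complex.exp (Complex.I * ((n:ℂ) - m) * x))
      volume (0:ℝ) (2*π) := by
    intro n m
    apply Continuous.intervalIntegrable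
    fun_prop
  rw [intervalIntegral.integral_finset_sum]
  · have : ∀ n ∈ s, (∫ x : ℝ in (0:ℝ)..(2*π), ∑ m ∈ s,
        (c n * (starRingEnd ℂ) (c m) * Complex.exp (Complex.I * ((n:ℂ) - m) * x)).re)
        = 2 * π * ‖c n‖ ^ 2 := by
      intro n hn
      rw [intervalIntegral.integral_finset_sum]
      · have h2 : ∀ m ∈ s, (∫ x : ℝ in (0:ℝ)..(2*π),
            (c n * (starRingEnd ℂ) (c m) * Complex.exp (Complex.I * ((n:ℂ) - m) * x)).re)
            = if n = m then 2 * π * ‖c n‖ ^ 2 else 0 := by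
          intro m _
          rw [show (fun x : ℝ => (c n * (starRingEnd ℂ) (c m)
              * Complex.exp (Complex.I * ((n:ℂ) - m) * x)).re)
            = fun x : ℝ => Complex.reCLM (c n * (starRingEnd ℂ) (c m)
              * Complex.exp (Complex.I * ((n:ℂ) - m) * x)) from rfl,
            Complex.reCLM.intervalIntegral_comp_comm (hint n m),
            intervalIntegral.integral_const_mul, ortho n m]
          rcases eq_or_ne n m with h | h
          · subst h
            rw [if_pos rfl, if_pos rfl]
            simp [Complex.mul_conj, Complex.normSq_eq_norm_sq,
              ← Complex.ofReal_pow]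
            ring
          · rw [if_neg h, if_neg h]
            simp
        rw [Finset.sum_congr rfl h2, Finset.sum_ite_eq s n fun _ => 2 * π * ‖c n‖ ^ 2,
          if_pos hn]
      · intro m _
        apply Continuous.intervalIntegrable
        fun_prop
    rw [Finset.sum_congr rfl this, ← Finset.mul_sum]
  · intro n _
    apply Continuous.intervalIntegrable
    exact continuous_finset_sum _ fun m _ => by fun_prop

lemma parseval_shift (r : ℝ) (s : Finset ℤ) (c : ℤ → ℂ) :
    ∫ x : ℝ in (0:ℝ)..(2*π),
        ‖∑ n ∈ s, c n * Complex.exp (Complex.I * ((((n:ℝ) + r : ℝ) : ℂ) * x))‖ ^ 2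
      = 2 * π * ∑ n ∈ s, ‖c n‖ ^ 2 := by
  have hpt : ∀ x : ℝ, ‖∑ n ∈ s, c n * Complex.exp (Complex.I * ((((n:ℝ) + r : ℝ) : ℂ) * x))‖ ^ 2
      = ‖∑ n ∈ s, c n * Complex.exp (Complex.I * ((n:ℂ) * x))‖ ^ 2 := by
    intro x
    have h1 : ∀ n : ℤ, c n * Complex.exp (Complex.I * ((((n:ℝ) + r : ℝ) : ℂ) * x))
        = (c n * Complex.exp (Complex.I * ((n:ℂ) * x))) * Complex.exp (Complex.I * (r * x)) := by
      intro n
      rw [mul_assoc, ← Complex.exp_add]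
      congr 2
      push_cast
      ring
    simp only [h1, ← Finset.sum_mul, norm_mul, Complex.norm_exp]
    have : (Complex.I * ((r:ℂ) * (x:ℂ))).re = 0 := by simp
    rw [this, Real.exp_zero, mul_one]
  simp only [hpt]
  exact parseval_core s c

/-- With the conical diffraction parameters, b ∈ ℝ and ε₀ > 0,
there is a constant C > 0 (independent of A) such that for every finitely
supported A : ℤ → ℂ, with e(x₁,x₂) = Σ_n A_n·exp(i(α_n x₁ + β_n x₂)),
∫₀^{2π} |Σ_{n∈𝓐} A_n·exp(i(α_n x₁ + β_n b))|² dx₁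
  ≤ C·∫₀^{2π} ∫_{b−ε₀}^{b} |e|² dx₂ dx₁,
where 𝓐 = {n : −k(1+sinθcosφ) < n ≤ −kcosφ(1+sinθ)} ∪
{n : kcosφ(1−sinθ) ≤ n < k(1−sinθcosφ)}. -/
theorem stmt_12 (k θ φ : ℝ) (hk : 0 < k)
    (hθ : θ ∈ Set.Ioo (-(π / 2)) (π / 2)) (hφ : φ ∈ Set.Ioo (-(π / 2)) (π / 2))
    (κ2 : ℝ) (hκ2 : κ2 = k ^ 2 * Real.cos φ ^ 2)
    (a : ℤ → ℝ) (ha : ∀ n : ℤ, a n = (n : ℝ) + k * Real.sin θ * Real.cos φ)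
    (B : ℤ → ℂ)
    (hB : ∀ n : ℤ, B n = if (a n) ^ 2 ≤ κ2
        then ((Real.sqrt (κ2 - (a n) ^ 2) : ℝ) : ℂ)
        else Complex.I * ((Real.sqrt ((a n) ^ 2 - κ2) : ℝ) : ℂ))
    (b ε₀ : ℝ) (hε₀ : 0 < ε₀) :
    ∃ C : ℝ, 0 < C ∧
      ∀ A : ℤ → ℂ, (Function.support A).Finite →
        (∫ x₁ in (0 : ℝ)..(2 * π),
            ‖∑' n : ℤ,
              (if (-(k * (1 + Real.sin θ * Real.cos φ)) < (n : ℝ) ∧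
                    (n : ℝ) ≤ -(k * Real.cos φ * (1 + Real.sin θ))) ∨
                  (k * Real.cos φ * (1 - Real.sin θ) ≤ (n : ℝ) ∧
                    (n : ℝ) < k * (1 - Real.sin θ * Real.cos φ))
                then A n * Complex.exp (Complex.I *
                  (((a n : ℝ) : ℂ) * (x₁ : ℂ) + B n * (b : ℂ)))
                else 0)‖ ^ 2)
          ≤ C * ∫ x₁ in (0 : ℝ)..(2 * π), ∫ x₂ in (b - ε₀)..b,
              ‖∑' n : ℤ, A n * Complex.exp (Complex.I *
                (((a n : ℝ) : ℂ) * (x₁ : ℂ) + B n * (x₂ : ℂ)))‖ ^ 2 := by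
  set r : ℝ := k * Real.sin θ * Real.cos φ with hr
  have him : ∀ n : ℤ, 0 ≤ (B n).im := by
    intro n
    rw [hB n]
    split_ifs
    · simp
    · simp [Complex.mul_im, Real.sqrt_nonneg]
  have hne : ∀ (n : ℤ) (t : ℝ), ‖Complex.exp (Complex.I * (B n * (t:ℂ)))‖ ^ 2
      = Real.exp (-(2 * (B n).im * t)) := by
    intro n t
    rw [Complex.norm_exp, sq, ← Real.exp_add]
    congr 1
    simp [Complex.mul_re, Complex.mul_im]
    ring
  have h2π : (0:ℝ) ≤ 2*π := by positivity
  have hbe : b - ε₀ ≤ b := by linarith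
  refine ⟨ε₀⁻¹, by positivity, fun A hA => ?_⟩
  classical
  set s : Finset ℤ := hA.toFinset with hs
  have hsupp : ∀ n : ℤ, n ∉ s → A n = 0 := by
    intro n hn
    by_contra h
    exact hn (hA.mem_toFinset.mpr h)
  have hterm : ∀ (n : ℤ) (x₁ x₂ : ℝ),
      A n * Complex.exp (Complex.I * (((a n : ℝ) : ℂ) * (x₁ : ℂ) + B n * (x₂ : ℂ)))
        = (A n * Complex.exp (Complex.I * (B n * (x₂:ℂ))))
          * Complex.exp (Complex.I * ((((n:ℝ) + r : ℝ) : ℂ) * (x₁:ℂ))) := by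
    intro n x₁ x₂
    rw [ha n, mul_assoc, ← Complex.exp_add]
    congr 1
    push_cast
    ring
  have ht2 : ∀ x₁ x₂ : ℝ,
      (∑' n : ℤ, A n * Complex.exp (Complex.I *
        (((a n : ℝ) : ℂ) * (x₁ : ℂ) + B n * (x₂ : ℂ))))
      = ∑ n ∈ s, A n * Complex.exp (Complex.I *
        (((a n : ℝ) : ℂ) * (x₁ : ℂ) + B n * (x₂ : ℂ))) := by
    intro x₁ x₂
    exact tsum_eq_sum (fun n hn => by rw [hsupp n hn, zero_mul])
  have ht1 : ∀ x₁ : ℝ,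
      (∑' n : ℤ, (if ((-(k * (1 + Real.sin θ * Real.cos φ)) < (n : ℝ) ∧
                    (n : ℝ) ≤ -(k * Real.cos φ * (1 + Real.sin θ))) ∨
                  (k * Real.cos φ * (1 - Real.sin θ) ≤ (n : ℝ) ∧
                    (n : ℝ) < k * (1 - Real.sin θ * Real.cos φ)))
        then A n * Complex.exp (Complex.I * (((a n : ℝ) : ℂ) * (x₁ : ℂ) + B n * (b : ℂ)))
        else 0))
      = ∑ n ∈ s, (if ((-(k * (1 + Real.sin θ * Real.cos φ)) < (n : ℝ) ∧
                    (n : ℝ) ≤ -(k * Real.cos φ * (1 + Real.sin θ))) ∨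
                  (k * Real.cos φ * (1 - Real.sin θ) ≤ (n : ℝ) ∧
                    (n : ℝ) < k * (1 - Real.sin θ * Real.cos φ)))
        then A n * Complex.exp (Complex.I * (((a n : ℝ) : ℂ) * (x₁ : ℂ) + B n * (b : ℂ)))
        else 0) := by
    intro x₁
    refine tsum_eq_sum (fun n hn => ?_)
    rw [hsupp n hn, zero_mul, ite_self]
  simp only [ht1, ht2]
  set c₁ : ℤ → ℂ := fun n => if ((-(k * (1 + Real.sin θ * Real.cos φ)) < (n : ℝ) ∧
                    (n : ℝ) ≤ -(k * Real.cos φ * (1 + Real.sin θ))) ∨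
                  (k * Real.cos φ * (1 - Real.sin θ) ≤ (n : ℝ) ∧
                    (n : ℝ) < k * (1 - Real.sin θ * Real.cos φ)))
      then A n * Complex.exp (Complex.I * (B n * (b:ℂ))) else 0 with hc₁
  have hc₁n : ∀ n : ℤ, c₁ n = if ((-(k * (1 + Real.sin θ * Real.cos φ)) < (n : ℝ) ∧
                    (n : ℝ) ≤ -(k * Real.cos φ * (1 + Real.sin θ))) ∨
                  (k * Real.cos φ * (1 - Real.sin θ) ≤ (n : ℝ) ∧
                    (n : ℝ) < k * (1 - Real.sin θ * Real.cos φ)))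
      then A n * Complex.exp (Complex.I * (B n * (b:ℂ))) else 0 := fun n => rfl
  have hL : (∫ x₁ in (0:ℝ)..(2*π), ‖∑ n ∈ s, (if ((-(k * (1 + Real.sin θ * Real.cos φ)) < (n : ℝ) ∧
                    (n : ℝ) ≤ -(k * Real.cos φ * (1 + Real.sin θ))) ∨
                  (k * Real.cos φ * (1 - Real.sin θ) ≤ (n : ℝ) ∧
                    (n : ℝ) < k * (1 - Real.sin θ * Real.cos φ)))
        then A n * Complex.exp (Complex.I * (((a n : ℝ) : ℂ) * (x₁ : ℂ) + B n * (b : ℂ)))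
        else 0)‖ ^ 2)
      = 2 * π * ∑ n ∈ s, ‖c₁ n‖ ^ 2 := by
    have hpt : ∀ x₁ : ℝ, (∑ n ∈ s, (if ((-(k * (1 + Real.sin θ * Real.cos φ)) < (n : ℝ) ∧
                    (n : ℝ) ≤ -(k * Real.cos φ * (1 + Real.sin θ))) ∨
                  (k * Real.cos φ * (1 - Real.sin θ) ≤ (n : ℝ) ∧
                    (n : ℝ) < k * (1 - Real.sin θ * Real.cos φ)))
        then A n * Complex.exp (Complex.I * (((a n : ℝ) : ℂ) * (x₁ : ℂ) + B n * (b : ℂ)))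
        else 0))
        = ∑ n ∈ s, c₁ n * Complex.exp (Complex.I * ((((n:ℝ) + r : ℝ) : ℂ) * (x₁:ℂ))) := by
      intro x₁
      refine Finset.sum_congr rfl fun n _ => ?_
      rw [hc₁n n]
      by_cases h : ((-(k * (1 + Real.sin θ * Real.cos φ)) < (n : ℝ) ∧
                    (n : ℝ) ≤ -(k * Real.cos φ * (1 + Real.sin θ))) ∨
                  (k * Real.cos φ * (1 - Real.sin θ) ≤ (n : ℝ) ∧
                    (n : ℝ) < k * (1 - Real.sin θ * Real.cos φ)))
      · rw [if_pos h, if_pos h]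
        exact hterm n x₁ b
      · rw [if_neg h, if_neg h, zero_mul]
    simp only [hpt]
    exact parseval_shift r s c₁
  rw [hL]
  have hinner : ∀ x₂ : ℝ, (∫ x₁ in (0:ℝ)..(2*π), ‖∑ n ∈ s, A n * Complex.exp (Complex.I *
        (((a n : ℝ) : ℂ) * (x₁ : ℂ) + B n * (x₂ : ℂ)))‖ ^ 2)
      = 2 * π * ∑ n ∈ s, ‖A n‖ ^ 2 * Real.exp (-(2 * (B n).im * x₂)) := by
    intro x₂
    simp only [hterm]
    rw [parseval_shift r s (fun n => A n * Complex.exp (Complex.I * (B n * (x₂:ℂ))))]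
    congr 1
    exact Finset.sum_congr rfl fun n _ => by rw [norm_mul, mul_pow, hne n x₂]
  have hcont : Continuous (fun p : ℝ × ℝ => ‖∑ n ∈ s, A n * Complex.exp (Complex.I *
      (((a n : ℝ) : ℂ) * (p.1 : ℂ) + B n * (p.2 : ℂ)))‖ ^ 2) := by fun_prop
  have hInt : Integrable (Function.uncurry fun x₁ x₂ : ℝ => ‖∑ n ∈ s, A n * Complex.exp
      (Complex.I * (((a n : ℝ) : ℂ) * (x₁ : ℂ) + B n * (x₂ : ℂ)))‖ ^ 2)
      ((volume.restrict (Set.Ioc (0:ℝ) (2*π))).prod (volume.restrict (Set.Ioc (b-ε₀) b))) := by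
    rw [Measure.prod_restrict]
    refine IntegrableOn.mono_set ?_
      (Set.prod_mono Set.Ioc_subset_Icc_self Set.Ioc_subset_Icc_self)
    exact hcont.continuousOn.integrableOn_compact (isCompact_Icc.prod isCompact_Icc)
  have hswap : (∫ x₁ in (0:ℝ)..(2*π), ∫ x₂ in (b-ε₀)..b, ‖∑ n ∈ s, A n * Complex.exp
        (Complex.I * (((a n : ℝ) : ℂ) * (x₁ : ℂ) + B n * (x₂ : ℂ)))‖ ^ 2)
      = ∫ x₂ in (b-ε₀)..b, ∫ x₁ in (0:ℝ)..(2*π), ‖∑ n ∈ s, A n * Complex.exp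
        (Complex.I * (((a n : ℝ) : ℂ) * (x₁ : ℂ) + B n * (x₂ : ℂ)))‖ ^ 2 := by
    simp only [intervalIntegral.integral_of_le hbe, intervalIntegral.integral_of_le h2π]
    exact MeasureTheory.integral_integral_swap hInt
  rw [hswap]
  simp only [hinner]
  set Q : ℝ := 2 * π * ∑ n ∈ s, ‖A n‖ ^ 2 * Real.exp (-(2 * (B n).im * b)) with hQdef
  have hQ0 : 0 ≤ Q := by positivity
  have hlow : ε₀ * Q ≤ ∫ x₂ in (b-ε₀)..b,
      2 * π * ∑ n ∈ s, ‖A n‖ ^ 2 * Real.exp (-(2 * (B n).im * x₂)) := by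
    have hcmp : ∀ x₂ ∈ Set.Icc (b-ε₀) b, Q ≤
        2 * π * ∑ n ∈ s, ‖A n‖ ^ 2 * Real.exp (-(2 * (B n).im * x₂)) := by
      intro x₂ hx
      rw [hQdef]
      refine mul_le_mul_of_nonneg_left (Finset.sum_le_sum fun n _ => ?_) (by positivity)
      refine mul_le_mul_of_nonneg_left (Real.exp_le_exp.mpr ?_) (by positivity)
      have h1 := him n
      nlinarith [hx.2]
    calc ε₀ * Q = ∫ _x₂ in (b-ε₀)..b, Q := by
          rw [intervalIntegral.integral_const, show b - (b - ε₀) = ε₀ by ring, smul_eq_mul]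
      _ ≤ _ := by
          have hcG : Continuous fun x₂ : ℝ =>
              2 * π * ∑ n ∈ s, ‖A n‖ ^ 2 * Real.exp (-(2 * (B n).im * x₂)) := by fun_prop
          exact intervalIntegral.integral_mono_on hbe intervalIntegrable_const
            (hcG.intervalIntegrable _ _) hcmp
  have hup : 2 * π * ∑ n ∈ s, ‖c₁ n‖ ^ 2 ≤ Q := by
    rw [hQdef]
    refine mul_le_mul_of_nonneg_left (Finset.sum_le_sum fun n _ => ?_) (by positivity)
    rw [hc₁n n]
    by_cases h : ((-(k * (1 + Real.sin θ * Real.cos φ)) < (n : ℝ) ∧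
                    (n : ℝ) ≤ -(k * Real.cos φ * (1 + Real.sin θ))) ∨
                  (k * Real.cos φ * (1 - Real.sin θ) ≤ (n : ℝ) ∧
                    (n : ℝ) < k * (1 - Real.sin θ * Real.cos φ)))
    · rw [if_pos h, norm_mul, mul_pow, hne n b]
    · rw [if_neg h, norm_zero, zero_pow two_ne_zero]
      positivity
  calc 2 * π * ∑ n ∈ s, ‖c₁ n‖ ^ 2 ≤ Q := hup
    _ = ε₀⁻¹ * (ε₀ * Q) := by field_simp
    _ ≤ ε₀⁻¹ * ∫ x₂ in (b-ε₀)..b,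
        2 * π * ∑ n ∈ s, ‖A n‖ ^ 2 * Real.exp (-(2 * (B n).im * x₂)) := by
      exact mul_le_mul_of_nonneg_left hlow (by positivity)
end

section
/- Let β = √(κ² − α²) > 0 (note α² < κ² since |sinθ| < 1), let p₃, q₃ ∈ ℂ and let (u_n)_{n∈ℤ}, (v_n)_{n∈ℤ} be finitely supported families in ℂ. Define u(x₁,x₂) = p₃·exp(i(αx₁ − βx₂)) + Σ_n u_n·exp(i(α_nx₁ + β_nx₂)) and v(x₁,x₂) = q₃·exp(i(αx₁ − βx₂)) + Σ_n v_n·exp(i(α_nx₁ + β_nx₂)). Then Im ∫₀^{2π} [ (ωε·∂₂u − γ·∂₁v)·conj(u) + (ωμ·∂₂v + γ·∂₁u)·conj(v) ](x₁, b) dx₁ = −2πωβ·(ε|p₃|² + μ|q₃|²) + 2πω·Σ_{n : α_n² ≤ κ²} β_n·(ε|u_n|² + μ|v_n|²), for any b ∈ ℝ. -/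
open Real

private lemma aux_hasDerivAt (c w z : ℂ) (b : ℝ) :
    HasDerivAt (fun t : ℝ => c * Complex.exp (w + z * (t : ℂ)))
      (c * z * Complex.exp (w + z * (b : ℂ))) b := by
  have h2 : HasDerivAt (fun y : ℂ => w + z * y) z (b:ℂ) := by
    simpa using ((hasDerivAt_id (b:ℂ)).const_mul z).const_add w
  have h3 := (h2.cexp).const_mul c
  have h4 : HasDerivAt (fun y : ℂ => c * Complex.exp (w + z * y))
      (c * z * Complex.exp (w + z * (b:ℂ))) (b:ℂ) := by
    rw [show c * z * Complex.exp (w + z * (b:ℂ)) = c * (Complex.exp (w + z * (b:ℂ)) * z) by ring]; exact h3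
  exact h4.comp_ofReal

private lemma exp_orth (j : ℤ) :
    (∫ x in (0:ℝ)..(2*π), Complex.exp (Complex.I * (j : ℂ) * (x:ℂ)))
      = if j = 0 then ((2*π : ℝ) : ℂ) else 0 := by
  rcases eq_or_ne j 0 with h | h
  · simp [h]
  · rw [if_neg h]
    have hc : Complex.I * (j:ℂ) ≠ 0 := by
      apply mul_ne_zero Complex.I_ne_zero
      exact_mod_cast h
    have := integral_exp_mul_complex (a := (0:ℝ)) (b := 2*π) hc
    simp only [mul_assoc] at this ⊢
    rw [this]
    have h1 : Complex.exp (Complex.I * ((j:ℂ) * ((2*π : ℝ):ℂ))) = 1 := by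
      rw [show Complex.I * ((j:ℂ) * ((2*π : ℝ):ℂ)) = (j:ℂ) * (2 * (π:ℂ) * Complex.I) by
        push_cast; ring]
      exact Complex.exp_int_mul_two_pi_mul_I j
    rw [h1]
    simp

private lemma im_main (β : ℝ) (A C : ℂ) :
    ((Complex.I*(β:ℂ)*A - Complex.I*(β:ℂ)*C) * (starRingEnd ℂ) (A + C)).im
      = β * (Complex.normSq A - Complex.normSq C) := by
  simp [Complex.mul_im, Complex.mul_re, Complex.normSq_apply]
  ring

private lemma im_prop (r : ℝ) (c e : ℂ) :
    ((c*(Complex.I*(r:ℂ))*e) * (starRingEnd ℂ) (c*e)).im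
      = r * (Complex.normSq c * Complex.normSq e) := by
  simp [Complex.mul_im, Complex.mul_re, Complex.normSq_apply]
  ring

private lemma im_evan (t : ℝ) (c e : ℂ) :
    ((c*(Complex.I*(Complex.I*(t:ℂ)))*e) * (starRingEnd ℂ) (c*e)).im = 0 := by
  simp [Complex.mul_im, Complex.mul_re]
  ring

private lemma im_pair (r : ℝ) (U V : ℂ) :
    (Complex.I*(r:ℂ)*U * (starRingEnd ℂ) V).im
      = (Complex.I*(r:ℂ)*V * (starRingEnd ℂ) U).im := by
  simp [Complex.mul_im, Complex.mul_re]
  ring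

private lemma normSq_exp_one (w : ℂ) (hw : w.re = 0) :
    Complex.normSq (Complex.exp w) = 1 := by
  rw [Complex.normSq_eq_norm_sq, Complex.norm_exp, hw, Real.exp_zero, one_pow]

private lemma ofReal_mul_im (r : ℝ) (z : ℂ) : ((r:ℂ) * z).im = r * z.im := by
  simp [Complex.mul_im]

private lemma normSq_norm (z : ℂ) : Complex.normSq z = ‖z‖ ^ 2 := by
  rw [Complex.normSq_eq_norm_sq]

private lemma rearr (s : Finset ℤ) (h0 : (0:ℤ) ∈ s) (r : ℤ → ℝ) (α β : ℝ)
    (hr0 : r 0 = α) (B : ℤ → ℂ) (c : ℤ → ℂ) (P : ℂ) (x₁ b : ℝ) :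
    P * Complex.exp (Complex.I*(α:ℂ)*(x₁:ℂ) + (-(Complex.I*(β:ℂ)))*(b:ℂ))
      + ∑ n ∈ s, c n * Complex.exp (Complex.I*((r n : ℝ):ℂ)*(x₁:ℂ) + (Complex.I * B n)*(b:ℂ))
    = ∑ m ∈ s, (c m * Complex.exp (Complex.I*B m*(b:ℂ))
        + if m = 0 then P * Complex.exp (-(Complex.I*(β:ℂ)*(b:ℂ))) else 0)
        * Complex.exp (Complex.I*((r m : ℝ):ℂ)*(x₁:ℂ)) := by
  simp only [add_mul, Finset.sum_add_distrib, ite_mul, zero_mul]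
  rw [Finset.sum_ite_eq' s 0
    (fun m => P * Complex.exp (-(Complex.I*(β:ℂ)*(b:ℂ)))
      * Complex.exp (Complex.I*((r m : ℝ):ℂ)*(x₁:ℂ))),
    if_pos h0, hr0]
  rw [add_comm]
  congr 1
  · exact Finset.sum_congr rfl fun n _ => by rw [Complex.exp_add]; ring
  · rw [show (-(Complex.I*(β:ℂ)))*(b:ℂ) = -(Complex.I*(β:ℂ)*(b:ℂ)) by ring,
      Complex.exp_add]
    ring

private lemma expand_prod (s : Finset ℤ) (c1 c2 c3 c4 : ℂ)
    (Du Pv Dv Pu U V E : ℤ → ℂ) :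
    (c1 * (∑ m ∈ s, Du m * E m) - c2 * (∑ m ∈ s, Pv m * E m))
        * (starRingEnd ℂ) (∑ n ∈ s, U n * E n)
    + (c3 * (∑ m ∈ s, Dv m * E m) + c4 * (∑ m ∈ s, Pu m * E m))
        * (starRingEnd ℂ) (∑ n ∈ s, V n * E n)
    = ∑ m ∈ s, ∑ n ∈ s,
        (c1 * (Du m * (starRingEnd ℂ) (U n)) - c2 * (Pv m * (starRingEnd ℂ) (U n))
          + c3 * (Dv m * (starRingEnd ℂ) (V n)) + c4 * (Pu m * (starRingEnd ℂ) (V n)))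
        * (E m * (starRingEnd ℂ) (E n)) := by
  simp only [map_sum, map_mul, Finset.mul_sum, Finset.sum_mul,
    ← Finset.sum_sub_distrib, ← Finset.sum_add_distrib]
  rw [Finset.sum_comm]
  refine Finset.sum_congr rfl fun m _ => Finset.sum_congr rfl fun n _ => by ring

set_option maxHeartbeats 2000000 in
/-- Energy identity for the total fields. With the conical
diffraction parameters, β = √(κ² − α²) > 0, p₃, q₃ ∈ ℂ and finitely supported
Rayleigh coefficients (u_n), (v_n), define the total fields
u(x₁,x₂) = p₃·exp(i(αx₁ − βx₂)) + Σ_n u_n·exp(i(α_n x₁ + β_n x₂)) and similarly v.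
Then for any b ∈ ℝ,
Im ∫₀^{2π} [(ωε·∂₂u − γ·∂₁v)·conj(u) + (ωμ·∂₂v + γ·∂₁u)·conj(v)](x₁,b) dx₁
  = −2πωβ·(ε|p₃|² + μ|q₃|²) + 2πω·Σ_{n : α_n² ≤ κ²} β_n·(ε|u_n|² + μ|v_n|²). -/
theorem stmt_13 (ω ε μ θ φ : ℝ) (hω : 0 < ω) (hε : 0 < ε) (hμ : 0 < μ)
    (hθ : θ ∈ Set.Ioo (-(π / 2)) (π / 2)) (hφ : φ ∈ Set.Ioo (-(π / 2)) (π / 2))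
    (k γ κ2 α β : ℝ)
    (hk : k = ω * Real.sqrt (ε * μ)) (hγ : γ = k * Real.sin φ)
    (hκ2 : κ2 = k ^ 2 * Real.cos φ ^ 2)
    (hα : α = k * Real.sin θ * Real.cos φ)
    (hβ : β = Real.sqrt (κ2 - α ^ 2))
    (a : ℤ → ℝ) (ha : ∀ n : ℤ, a n = (n : ℝ) + α)
    (B : ℤ → ℂ)
    (hB : ∀ n : ℤ, B n = if (a n) ^ 2 ≤ κ2
        then ((Real.sqrt (κ2 - (a n) ^ 2) : ℝ) : ℂ)
        else Complex.I * ((Real.sqrt ((a n) ^ 2 - κ2) : ℝ) : ℂ))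
    (p₃ q₃ : ℂ)
    (uc vc : ℤ → ℂ)
    (huc : (Function.support uc).Finite) (hvc : (Function.support vc).Finite)
    (u v : ℝ → ℝ → ℂ)
    (hu : ∀ x₁ x₂ : ℝ, u x₁ x₂ =
        p₃ * Complex.exp (Complex.I * ((α : ℂ) * (x₁ : ℂ) - (β : ℂ) * (x₂ : ℂ)))
        + ∑' n : ℤ, uc n * Complex.exp (Complex.I *
            (((a n : ℝ) : ℂ) * (x₁ : ℂ) + B n * (x₂ : ℂ))))
    (hv : ∀ x₁ x₂ : ℝ, v x₁ x₂ =
        q₃ * Complex.exp (Complex.I * ((α : ℂ) * (x₁ : ℂ) - (β : ℂ) * (x₂ : ℂ)))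
        + ∑' n : ℤ, vc n * Complex.exp (Complex.I *
            (((a n : ℝ) : ℂ) * (x₁ : ℂ) + B n * (x₂ : ℂ))))
    (b : ℝ) :
    (∫ x₁ in (0 : ℝ)..(2 * π),
        ((((ω * ε : ℝ)) : ℂ) * deriv (fun t : ℝ => u x₁ t) b
            - (γ : ℂ) * deriv (fun t : ℝ => v t b) x₁) * (starRingEnd ℂ) (u x₁ b)
        + ((((ω * μ : ℝ)) : ℂ) * deriv (fun t : ℝ => v x₁ t) b
            + (γ : ℂ) * deriv (fun t : ℝ => u t b) x₁) * (starRingEnd ℂ) (v x₁ b)).im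
      = -(2 * π * ω * β * (ε * ‖p₃‖ ^ 2 + μ * ‖q₃‖ ^ 2))
        + 2 * π * ω * ∑' n : ℤ,
            (if (a n) ^ 2 ≤ κ2
              then Real.sqrt (κ2 - (a n) ^ 2) * (ε * ‖uc n‖ ^ 2 + μ * ‖vc n‖ ^ 2)
              else 0) := by
  classical
  -- the index set
  set s : Finset ℤ := huc.toFinset ∪ hvc.toFinset ∪ {0} with hs
  have h0s : (0:ℤ) ∈ s := by simp [hs]
  have hucs : ∀ n : ℤ, n ∉ s → uc n = 0 := by
    intro n hn
    by_contra h
    exact hn (by simp [hs, Function.mem_support, h])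
  have hvcs : ∀ n : ℤ, n ∉ s → vc n = 0 := by
    intro n hn
    by_contra h
    exact hn (by simp [hs, Function.mem_support, h])
  clear_value s
  have ha0 : a 0 = α := by rw [ha]; simp
  have hle : (a 0) ^ 2 ≤ κ2 := by
    rw [ha0, hα, hκ2]
    nlinarith [Real.sin_sq_le_one θ, sq_nonneg (k * Real.cos φ)]
  have hB0 : B 0 = (β:ℂ) := by
    rw [hB 0, if_pos hle, ha0, ← hβ]
  have hsq0 : Real.sqrt (κ2 - (a 0) ^ 2) = β := by rw [ha0, hβ]
  -- coefficient families
  obtain ⟨U, hU⟩ : ∃ U : ℤ → ℂ, ∀ m, U m =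
      uc m * Complex.exp (Complex.I*B m*(b:ℂ))
        + if m = 0 then p₃ * Complex.exp (-(Complex.I*(β:ℂ)*(b:ℂ))) else 0 :=
    ⟨_, fun m => rfl⟩
  obtain ⟨V, hV⟩ : ∃ V : ℤ → ℂ, ∀ m, V m =
      vc m * Complex.exp (Complex.I*B m*(b:ℂ))
        + if m = 0 then q₃ * Complex.exp (-(Complex.I*(β:ℂ)*(b:ℂ))) else 0 :=
    ⟨_, fun m => rfl⟩
  obtain ⟨Du, hDu⟩ : ∃ D : ℤ → ℂ, ∀ m, D m =
      uc m * (Complex.I * B m) * Complex.exp (Complex.I*B m*(b:ℂ))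
        + if m = 0 then p₃ * (-(Complex.I*(β:ℂ)))
            * Complex.exp (-(Complex.I*(β:ℂ)*(b:ℂ))) else 0 :=
    ⟨_, fun m => rfl⟩
  obtain ⟨Dv, hDv⟩ : ∃ D : ℤ → ℂ, ∀ m, D m =
      vc m * (Complex.I * B m) * Complex.exp (Complex.I*B m*(b:ℂ))
        + if m = 0 then q₃ * (-(Complex.I*(β:ℂ)))
            * Complex.exp (-(Complex.I*(β:ℂ)*(b:ℂ))) else 0 :=
    ⟨_, fun m => rfl⟩
  obtain ⟨Pu, hPu⟩ : ∃ P : ℤ → ℂ, ∀ m, P m =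
      uc m * (Complex.I * ((a m : ℝ):ℂ)) * Complex.exp (Complex.I*B m*(b:ℂ))
        + if m = 0 then p₃ * (Complex.I*(α:ℂ))
            * Complex.exp (-(Complex.I*(β:ℂ)*(b:ℂ))) else 0 :=
    ⟨_, fun m => rfl⟩
  obtain ⟨Pv, hPv⟩ : ∃ P : ℤ → ℂ, ∀ m, P m =
      vc m * (Complex.I * ((a m : ℝ):ℂ)) * Complex.exp (Complex.I*B m*(b:ℂ))
        + if m = 0 then q₃ * (Complex.I*(α:ℂ))
            * Complex.exp (-(Complex.I*(β:ℂ)*(b:ℂ))) else 0 :=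
    ⟨_, fun m => rfl⟩
  have hPuU : ∀ m, Pu m = Complex.I * ((a m : ℝ):ℂ) * U m := by
    intro m
    rw [hPu m, hU m]
    rcases eq_or_ne m 0 with h | h
    · subst h
      rw [if_pos rfl, if_pos rfl, ha0]
      ring
    · rw [if_neg h, if_neg h]; ring
  have hPvV : ∀ m, Pv m = Complex.I * ((a m : ℝ):ℂ) * V m := by
    intro m
    rw [hPv m, hV m]
    rcases eq_or_ne m 0 with h | h
    · subst h
      rw [if_pos rfl, if_pos rfl, ha0]
      ring
    · rw [if_neg h, if_neg h]; ring
  -- values of the fields on the line x₂ = b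
  have hub : ∀ x₁ : ℝ, u x₁ b
      = ∑ m ∈ s, U m * Complex.exp (Complex.I*((a m : ℝ):ℂ)*(x₁:ℂ)) := by
    intro x₁
    rw [hu x₁ b, tsum_eq_sum (s := s) (fun n hn => by rw [hucs n hn, zero_mul])]
    rw [show (∑ n ∈ s, uc n * Complex.exp (Complex.I *
          (((a n : ℝ) : ℂ) * (x₁ : ℂ) + B n * (b : ℂ))))
        = ∑ n ∈ s, uc n * Complex.exp (Complex.I*((a n : ℝ):ℂ)*(x₁:ℂ)
            + (Complex.I * B n)*(b:ℂ)) from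
      Finset.sum_congr rfl fun n _ => by rw [show Complex.I *
        (((a n : ℝ) : ℂ) * (x₁ : ℂ) + B n * (b : ℂ))
        = Complex.I*((a n : ℝ):ℂ)*(x₁:ℂ) + (Complex.I * B n)*(b:ℂ) by ring]]
    rw [show Complex.I * ((α : ℂ) * (x₁ : ℂ) - (β : ℂ) * (b : ℂ))
        = Complex.I*(α:ℂ)*(x₁:ℂ) + (-(Complex.I*(β:ℂ)))*(b:ℂ) by ring]
    rw [rearr s h0s a α β ha0 B uc p₃ x₁ b]
    exact Finset.sum_congr rfl fun m _ => by rw [hU m]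
  have hvb : ∀ x₁ : ℝ, v x₁ b
      = ∑ m ∈ s, V m * Complex.exp (Complex.I*((a m : ℝ):ℂ)*(x₁:ℂ)) := by
    intro x₁
    rw [hv x₁ b, tsum_eq_sum (s := s) (fun n hn => by rw [hvcs n hn, zero_mul])]
    rw [show (∑ n ∈ s, vc n * Complex.exp (Complex.I *
          (((a n : ℝ) : ℂ) * (x₁ : ℂ) + B n * (b : ℂ))))
        = ∑ n ∈ s, vc n * Complex.exp (Complex.I*((a n : ℝ):ℂ)*(x₁:ℂ)
            + (Complex.I * B n)*(b:ℂ)) from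
      Finset.sum_congr rfl fun n _ => by rw [show Complex.I *
        (((a n : ℝ) : ℂ) * (x₁ : ℂ) + B n * (b : ℂ))
        = Complex.I*((a n : ℝ):ℂ)*(x₁:ℂ) + (Complex.I * B n)*(b:ℂ) by ring]]
    rw [show Complex.I * ((α : ℂ) * (x₁ : ℂ) - (β : ℂ) * (b : ℂ))
        = Complex.I*(α:ℂ)*(x₁:ℂ) + (-(Complex.I*(β:ℂ)))*(b:ℂ) by ring]
    rw [rearr s h0s a α β ha0 B vc q₃ x₁ b]
    exact Finset.sum_congr rfl fun m _ => by rw [hV m]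
  -- derivatives in x₂
  have hDub : ∀ (cc : ℤ → ℂ) (P : ℂ) (f : ℝ → ℝ → ℂ)
      (hf : ∀ x₁ x₂ : ℝ, f x₁ x₂ =
        P * Complex.exp (Complex.I * ((α : ℂ) * (x₁ : ℂ) - (β : ℂ) * (x₂ : ℂ)))
        + ∑' n : ℤ, cc n * Complex.exp (Complex.I *
            (((a n : ℝ) : ℂ) * (x₁ : ℂ) + B n * (x₂ : ℂ))))
      (hcc : ∀ n : ℤ, n ∉ s → cc n = 0) (x₁ : ℝ),
      deriv (fun t : ℝ => f x₁ t) b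
      = ∑ m ∈ s, (cc m * (Complex.I * B m) * Complex.exp (Complex.I*B m*(b:ℂ))
          + if m = 0 then P * (-(Complex.I*(β:ℂ)))
              * Complex.exp (-(Complex.I*(β:ℂ)*(b:ℂ))) else 0)
          * Complex.exp (Complex.I*((a m : ℝ):ℂ)*(x₁:ℂ)) := by
    intro cc P f hf hcc x₁
    have hfe : (fun t : ℝ => f x₁ t) = fun t : ℝ =>
        P * Complex.exp ((Complex.I*(α:ℂ)*(x₁:ℂ)) + (-(Complex.I*(β:ℂ)))*(t:ℂ))
        + ∑ n ∈ s, cc n * Complex.exp ((Complex.I*((a n:ℝ):ℂ)*(x₁:ℂ))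
            + (Complex.I*B n)*(t:ℂ)) := by
      funext t
      rw [hf x₁ t, tsum_eq_sum (s := s) (fun n hn => by rw [hcc n hn, zero_mul])]
      congr 1
      · rw [show Complex.I * ((α : ℂ) * (x₁ : ℂ) - (β : ℂ) * (t : ℂ))
          = Complex.I*(α:ℂ)*(x₁:ℂ) + (-(Complex.I*(β:ℂ)))*(t:ℂ) by ring]
      · exact Finset.sum_congr rfl fun n _ => by rw [show Complex.I *
          (((a n : ℝ) : ℂ) * (x₁ : ℂ) + B n * (t : ℂ))
          = Complex.I*((a n : ℝ):ℂ)*(x₁:ℂ) + (Complex.I * B n)*(t:ℂ) by ring]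
    rw [hfe]
    have hd := (aux_hasDerivAt P (Complex.I*(α:ℂ)*(x₁:ℂ)) (-(Complex.I*(β:ℂ))) b).fun_add
      (HasDerivAt.fun_sum (fun n (_ : n ∈ s) =>
        aux_hasDerivAt (cc n) (Complex.I*((a n:ℝ):ℂ)*(x₁:ℂ)) (Complex.I*B n) b))
    rw [hd.deriv]
    exact rearr s h0s a α β ha0 B (fun n => cc n * (Complex.I * B n))
      (P * -(Complex.I*(β:ℂ))) x₁ b
  -- derivatives in x₁
  have hPub : ∀ (cc : ℤ → ℂ) (P : ℂ) (f : ℝ → ℝ → ℂ)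
      (hf : ∀ x₁ x₂ : ℝ, f x₁ x₂ =
        P * Complex.exp (Complex.I * ((α : ℂ) * (x₁ : ℂ) - (β : ℂ) * (x₂ : ℂ)))
        + ∑' n : ℤ, cc n * Complex.exp (Complex.I *
            (((a n : ℝ) : ℂ) * (x₁ : ℂ) + B n * (x₂ : ℂ))))
      (hcc : ∀ n : ℤ, n ∉ s → cc n = 0) (x₁ : ℝ),
      deriv (fun t : ℝ => f t b) x₁
      = ∑ m ∈ s, (cc m * (Complex.I * ((a m : ℝ):ℂ))
            * Complex.exp (Complex.I*B m*(b:ℂ))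
          + if m = 0 then P * (Complex.I*(α:ℂ))
              * Complex.exp (-(Complex.I*(β:ℂ)*(b:ℂ))) else 0)
          * Complex.exp (Complex.I*((a m : ℝ):ℂ)*(x₁:ℂ)) := by
    intro cc P f hf hcc x₁
    have hfe : (fun t : ℝ => f t b) = fun t : ℝ =>
        P * Complex.exp ((-(Complex.I*(β:ℂ)*(b:ℂ))) + (Complex.I*(α:ℂ))*(t:ℂ))
        + ∑ n ∈ s, cc n * Complex.exp ((Complex.I*B n*(b:ℂ))
            + (Complex.I*((a n:ℝ):ℂ))*(t:ℂ)) := by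
      funext t
      rw [hf t b, tsum_eq_sum (s := s) (fun n hn => by rw [hcc n hn, zero_mul])]
      congr 1
      · rw [show Complex.I * ((α : ℂ) * (t : ℂ) - (β : ℂ) * (b : ℂ))
          = (-(Complex.I*(β:ℂ)*(b:ℂ))) + (Complex.I*(α:ℂ))*(t:ℂ) by ring]
      · exact Finset.sum_congr rfl fun n _ => by rw [show Complex.I *
          (((a n : ℝ) : ℂ) * (t : ℂ) + B n * (b : ℂ))
          = (Complex.I*B n*(b:ℂ)) + (Complex.I*((a n:ℝ):ℂ))*(t:ℂ) by ring]
    rw [hfe]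
    have hd := (aux_hasDerivAt P (-(Complex.I*(β:ℂ)*(b:ℂ))) (Complex.I*(α:ℂ)) x₁).fun_add
      (HasDerivAt.fun_sum (fun n (_ : n ∈ s) =>
        aux_hasDerivAt (cc n) (Complex.I*B n*(b:ℂ)) (Complex.I*((a n:ℝ):ℂ)) x₁))
    rw [hd.deriv]
    rw [show Complex.exp (-(Complex.I*(β:ℂ)*(b:ℂ)) + Complex.I*(α:ℂ)*(x₁:ℂ))
        = Complex.exp (Complex.I*(α:ℂ)*(x₁:ℂ) + (-(Complex.I*(β:ℂ)))*(b:ℂ)) by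
      congr 1; ring]
    rw [show (∑ n ∈ s, cc n * (Complex.I*((a n:ℝ):ℂ))
          * Complex.exp (Complex.I*B n*(b:ℂ) + Complex.I*((a n:ℝ):ℂ)*(x₁:ℂ)))
        = ∑ n ∈ s, cc n * (Complex.I*((a n:ℝ):ℂ))
          * Complex.exp (Complex.I*((a n:ℝ):ℂ)*(x₁:ℂ) + (Complex.I*B n)*(b:ℂ)) from
      Finset.sum_congr rfl fun n _ => by rw [show Complex.I*B n*(b:ℂ)
        + Complex.I*((a n:ℝ):ℂ)*(x₁:ℂ)
        = Complex.I*((a n:ℝ):ℂ)*(x₁:ℂ) + (Complex.I*B n)*(b:ℂ) by ring]]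
    exact rearr s h0s a α β ha0 B (fun n => cc n * (Complex.I * ((a n:ℝ):ℂ)))
      (P * (Complex.I*(α:ℂ))) x₁ b
  have hDub_u : ∀ x₁ : ℝ, deriv (fun t : ℝ => u x₁ t) b
      = ∑ m ∈ s, Du m * Complex.exp (Complex.I*((a m : ℝ):ℂ)*(x₁:ℂ)) := by
    intro x₁
    rw [hDub uc p₃ u hu hucs x₁]
    exact Finset.sum_congr rfl fun m _ => by rw [hDu m]
  have hDvb_v : ∀ x₁ : ℝ, deriv (fun t : ℝ => v x₁ t) b
      = ∑ m ∈ s, Dv m * Complex.exp (Complex.I*((a m : ℝ):ℂ)*(x₁:ℂ)) := by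
    intro x₁
    rw [hDub vc q₃ v hv hvcs x₁]
    exact Finset.sum_congr rfl fun m _ => by rw [hDv m]
  have hPub_u : ∀ x₁ : ℝ, deriv (fun t : ℝ => u t b) x₁
      = ∑ m ∈ s, Pu m * Complex.exp (Complex.I*((a m : ℝ):ℂ)*(x₁:ℂ)) := by
    intro x₁
    rw [hPub uc p₃ u hu hucs x₁]
    exact Finset.sum_congr rfl fun m _ => by rw [hPu m]
  have hPvb_v : ∀ x₁ : ℝ, deriv (fun t : ℝ => v t b) x₁
      = ∑ m ∈ s, Pv m * Complex.exp (Complex.I*((a m : ℝ):ℂ)*(x₁:ℂ)) := by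
    intro x₁
    rw [hPub vc q₃ v hv hvcs x₁]
    exact Finset.sum_congr rfl fun m _ => by rw [hPv m]
  -- the coefficient matrix
  obtain ⟨G, hG⟩ : ∃ G : ℤ → ℤ → ℂ, ∀ m n, G m n =
      (((ω * ε : ℝ)) : ℂ) * (Du m * (starRingEnd ℂ) (U n))
        - (γ : ℂ) * (Pv m * (starRingEnd ℂ) (U n))
        + (((ω * μ : ℝ)) : ℂ) * (Dv m * (starRingEnd ℂ) (V n))
        + (γ : ℂ) * (Pu m * (starRingEnd ℂ) (V n)) :=
    ⟨_, fun _ _ => rfl⟩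
  have hEE : ∀ (m n : ℤ) (x : ℝ),
      Complex.exp (Complex.I*((a m : ℝ):ℂ)*(x:ℂ))
        * (starRingEnd ℂ) (Complex.exp (Complex.I*((a n : ℝ):ℂ)*(x:ℂ)))
      = Complex.exp (Complex.I * ((m - n : ℤ):ℂ) * (x:ℂ)) := by
    intro m n x
    rw [← Complex.exp_conj, ← Complex.exp_add]
    congr 1
    rw [map_mul, map_mul, Complex.conj_I, Complex.conj_ofReal, Complex.conj_ofReal]
    rw [ha m, ha n]
    push_cast
    ring
  -- pointwise identity for the integrand
  have hpt : ∀ x₁ : ℝ,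
      ((((ω * ε : ℝ)) : ℂ) * deriv (fun t : ℝ => u x₁ t) b
            - (γ : ℂ) * deriv (fun t : ℝ => v t b) x₁) * (starRingEnd ℂ) (u x₁ b)
        + ((((ω * μ : ℝ)) : ℂ) * deriv (fun t : ℝ => v x₁ t) b
            + (γ : ℂ) * deriv (fun t : ℝ => u t b) x₁) * (starRingEnd ℂ) (v x₁ b)
      = ∑ m ∈ s, ∑ n ∈ s, G m n * Complex.exp (Complex.I * ((m - n : ℤ):ℂ) * (x₁:ℂ)) := by
    intro x₁
    rw [hDub_u x₁, hDvb_v x₁, hPub_u x₁, hPvb_v x₁, hub x₁, hvb x₁]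
    rw [expand_prod s (((ω * ε : ℝ)) : ℂ) (γ : ℂ) (((ω * μ : ℝ)) : ℂ) (γ : ℂ)
      Du Pv Dv Pu U V (fun m => Complex.exp (Complex.I*((a m : ℝ):ℂ)*(x₁:ℂ)))]
    exact Finset.sum_congr rfl fun m _ => Finset.sum_congr rfl fun n _ => by
      rw [← hG m n, hEE m n x₁]
  -- evaluating the integral
  have hcont : ∀ (c : ℂ) (j : ℤ), Continuous
      (fun x : ℝ => c * Complex.exp (Complex.I * (j:ℂ) * (x:ℂ))) := fun c j =>
    continuous_const.mul
      (Complex.continuous_exp.comp (continuous_const.mul Complex.continuous_ofReal))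
  have hintg : ∀ (c : ℂ) (j : ℤ), IntervalIntegrable
      (fun x : ℝ => c * Complex.exp (Complex.I * (j:ℂ) * (x:ℂ)))
      MeasureTheory.volume 0 (2*π) := fun c j => (hcont c j).intervalIntegrable 0 (2*π)
  have hI : (∫ x₁ in (0:ℝ)..(2*π), ∑ m ∈ s, ∑ n ∈ s,
        G m n * Complex.exp (Complex.I * ((m - n : ℤ):ℂ) * (x₁:ℂ)))
      = ((2*π : ℝ):ℂ) * ∑ m ∈ s, G m m := by
    rw [intervalIntegral.integral_finset_sum
      (f := fun m x₁ => ∑ n ∈ s, G m n * Complex.exp (Complex.I * ((m - n : ℤ):ℂ) * (x₁:ℂ)))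
      (fun m _ => Continuous.intervalIntegrable
        (continuous_finset_sum s (fun n _ => hcont (G m n) (m - n))) 0 (2*π))]
    rw [Finset.sum_congr rfl (fun m (_ : m ∈ s) =>
      intervalIntegral.integral_finset_sum
        (f := fun n x₁ => G m n * Complex.exp (Complex.I * ((m - n : ℤ):ℂ) * (x₁:ℂ)))
        (fun n _ => hintg (G m n) (m - n)))]
    rw [Finset.sum_congr rfl (fun m (_ : m ∈ s) => Finset.sum_congr rfl
      (fun n (_ : n ∈ s) => by
        rw [intervalIntegral.integral_const_mul, exp_orth (m - n)]))]
    simp only [sub_eq_zero, mul_ite, mul_zero]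
    rw [Finset.sum_congr rfl (fun m (_ : m ∈ s) =>
      Finset.sum_ite_eq s m (fun n => G m n * ((2*π : ℝ):ℂ)))]
    rw [Finset.sum_congr rfl (fun m (hm : m ∈ s) => if_pos hm)]
    rw [← Finset.sum_mul, mul_comm]
  -- imaginary parts of the diagonal terms
  have hGim : ∀ m ∈ s, (G m m).im
      = ω * (if (a m)^2 ≤ κ2
          then Real.sqrt (κ2 - (a m)^2) * (ε * ‖uc m‖ ^ 2 + μ * ‖vc m‖ ^ 2)
          else 0)
        - (if m = 0 then ω * β * (ε * ‖p₃‖ ^ 2 + μ * ‖q₃‖ ^ 2) else 0) := by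
    intro m _
    rw [hG m m, Complex.add_im, Complex.add_im, Complex.sub_im,
      ofReal_mul_im, ofReal_mul_im, ofReal_mul_im, ofReal_mul_im]
    rw [hPuU m, hPvV m, im_pair (a m) (U m) (V m)]
    rcases eq_or_ne m 0 with hm | hm
    · subst hm
      rw [if_pos rfl, if_pos hle, hsq0]
      have hA : (Du 0 * (starRingEnd ℂ) (U 0)).im = β * (‖uc 0‖^2 - ‖p₃‖^2) := by
        rw [hDu 0, hU 0, if_pos rfl, if_pos rfl, hB0]
        rw [show uc 0 * (Complex.I * (β:ℂ)) * Complex.exp (Complex.I*(β:ℂ)*(b:ℂ))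
            + p₃ * -(Complex.I*(β:ℂ)) * Complex.exp (-(Complex.I*(β:ℂ)*(b:ℂ)))
          = Complex.I*(β:ℂ)*(uc 0 * Complex.exp (Complex.I*(β:ℂ)*(b:ℂ)))
            - Complex.I*(β:ℂ)*(p₃ * Complex.exp (-(Complex.I*(β:ℂ)*(b:ℂ)))) by ring]
        rw [im_main, Complex.normSq_mul, Complex.normSq_mul,
          normSq_exp_one (Complex.I*(β:ℂ)*(b:ℂ)) (by simp),
          normSq_exp_one (-(Complex.I*(β:ℂ)*(b:ℂ))) (by simp),
          normSq_norm, normSq_norm]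
        ring
      have hC : (Dv 0 * (starRingEnd ℂ) (V 0)).im = β * (‖vc 0‖^2 - ‖q₃‖^2) := by
        rw [hDv 0, hV 0, if_pos rfl, if_pos rfl, hB0]
        rw [show vc 0 * (Complex.I * (β:ℂ)) * Complex.exp (Complex.I*(β:ℂ)*(b:ℂ))
            + q₃ * -(Complex.I*(β:ℂ)) * Complex.exp (-(Complex.I*(β:ℂ)*(b:ℂ)))
          = Complex.I*(β:ℂ)*(vc 0 * Complex.exp (Complex.I*(β:ℂ)*(b:ℂ)))
            - Complex.I*(β:ℂ)*(q₃ * Complex.exp (-(Complex.I*(β:ℂ)*(b:ℂ)))) by ring]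
        rw [im_main, Complex.normSq_mul, Complex.normSq_mul,
          normSq_exp_one (Complex.I*(β:ℂ)*(b:ℂ)) (by simp),
          normSq_exp_one (-(Complex.I*(β:ℂ)*(b:ℂ))) (by simp),
          normSq_norm, normSq_norm]
        ring
      rw [hA, hC]
      ring
    · rw [if_neg hm]
      have hUm : U m = uc m * Complex.exp (Complex.I*B m*(b:ℂ)) := by
        rw [hU m, if_neg hm, add_zero]
      have hVm : V m = vc m * Complex.exp (Complex.I*B m*(b:ℂ)) := by
        rw [hV m, if_neg hm, add_zero]
      have hDum : Du m = uc m * (Complex.I * B m)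
          * Complex.exp (Complex.I*B m*(b:ℂ)) := by
        rw [hDu m, if_neg hm, add_zero]
      have hDvm : Dv m = vc m * (Complex.I * B m)
          * Complex.exp (Complex.I*B m*(b:ℂ)) := by
        rw [hDv m, if_neg hm, add_zero]
      by_cases hp : (a m)^2 ≤ κ2
      · rw [if_pos hp]
        rw [hUm, hVm, hDum, hDvm, hB m, if_pos hp]
        rw [im_prop, im_prop,
          normSq_exp_one (Complex.I*((Real.sqrt (κ2 - (a m)^2) : ℝ):ℂ)*(b:ℂ)) (by simp),
          normSq_norm, normSq_norm]
        ring
      · rw [if_neg hp]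
        rw [hUm, hVm, hDum, hDvm, hB m, if_neg hp]
        rw [im_evan, im_evan]
        ring
  -- final assembly
  rw [intervalIntegral.integral_congr
      (g := fun x₁ : ℝ => ∑ m ∈ s, ∑ n ∈ s,
        G m n * Complex.exp (Complex.I * ((m - n : ℤ):ℂ) * (x₁:ℂ)))
      (fun x _ => hpt x), hI]
  rw [show (((2*π : ℝ):ℂ) * ∑ m ∈ s, G m m).im
      = (2*π) * (∑ m ∈ s, G m m).im from by
    simp [Complex.mul_im, Complex.ofReal_re, Complex.ofReal_im]]
  rw [Complex.im_sum]
  rw [Finset.sum_congr rfl hGim, Finset.sum_sub_distrib,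
    Finset.sum_ite_eq' s 0 (fun _ => ω * β * (ε * ‖p₃‖ ^ 2 + μ * ‖q₃‖ ^ 2)),
    if_pos h0s, ← Finset.mul_sum]
  rw [tsum_eq_sum (s := s) (fun n hn => by rw [hucs n hn, hvcs n hn]; simp)]
  ring
end
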